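/- arXiv:2509.14852 — 8 statements merged into one kernel-verified Lean document; each statement's English description precedes it below -/
import Mathlib

section
/- For every γ ∈ [0,1], the supremum, over all pairs (ρ₀, ρ₁) of qubit density matrices and all two-outcome POVMs (Λ₀, Λ₁) on ℂ², of the average success probability (1/2)·Re Tr(Λ₀ · N_γ(ρ₀)) + (1/2)·Re Tr(Λ₁ · N_γ(ρ₁)) equals (1 + √(1−γ))/2, and this supremum is attained by taking ρ₀ = Λ₀ = ρ₊ and ρ₁ = Λ₁ = ρ₋. -/
/-!
Write a 2 × 2 Hermitian matrix in the Pauli basis as `A = (tr A • 1 + b(A) ⬝ σ) / 2`, with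
`b(A) ∈ ℝ³` its Bloch vector. Then `Re tr (A B) = (tr A tr B + ⟪b(A), b(B)⟫) / 2`, and
`det A = ((tr A)² - ‖b(A)‖²) / 4`, so positivity gives `‖b(A)‖ ≤ tr A`: states have Bloch vectors in
the unit ball, and so do both elements of a two-outcome POVM, as `b(Λ₁) = -b(Λ₀)` and
`tr Λ₀ + tr Λ₁ = 2`. Since `Λ₁ = 1 - Λ₀` and `N_γ` preserves the trace, the success probability
is `1/2 + ⟪b(Λ₀), b(N_γ(ρ₀ - ρ₁))⟫ / 4`. On traceless matrices `N_γ` multiplies the Bloch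
coordinates by `√(1-γ), √(1-γ), 1-γ`, so `‖b(N_γ(ρ₀ - ρ₁))‖ ≤ 2√(1-γ)`, and Cauchy–Schwarz
gives the bound `(1 + √(1-γ)) / 2`. It is attained by `ρ₊, ρ₋`, whose Bloch vectors are `±e₁`.
-/

open Matrix Complex
open scoped ComplexOrder

/-- Kraus operator `K₀` of the qubit amplitude damping channel. -/
noncomputable def K₀ (γ : ℝ) : Matrix (Fin 2) (Fin 2) ℂ :=
  !![1, 0; 0, (Real.sqrt (1 - γ) : ℂ)]

/-- Kraus operator `K₁` of the qubit amplitude damping channel. -/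
noncomputable def K₁ (γ : ℝ) : Matrix (Fin 2) (Fin 2) ℂ :=
  !![0, (Real.sqrt γ : ℂ); 0, 0]

/-- The qubit amplitude damping channel with damping parameter `γ`. -/
noncomputable def ADC (γ : ℝ) (ρ : Matrix (Fin 2) (Fin 2) ℂ) : Matrix (Fin 2) (Fin 2) ℂ :=
  K₀ γ * ρ * (K₀ γ)ᴴ + K₁ γ * ρ * (K₁ γ)ᴴ

/-- The state `ρ₊ = |+⟩⟨+|`. -/
noncomputable def ρPlus : Matrix (Fin 2) (Fin 2) ℂ := (1/2 : ℂ) • !![1, 1; 1, 1]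

/-- The state `ρ₋ = |−⟩⟨−|`. -/
noncomputable def ρMinus : Matrix (Fin 2) (Fin 2) ℂ := (1/2 : ℂ) • !![1, -1; -1, 1]

open scoped InnerProductSpace

noncomputable def blochVector (A : Matrix (Fin 2) (Fin 2) ℂ) : EuclideanSpace ℝ (Fin 3) :=
  !₂[2 * (A 0 1).re, -2 * (A 0 1).im, (A 0 0 - A 1 1).re]

lemma blochVector_add (A B : Matrix (Fin 2) (Fin 2) ℂ) :
    blochVector (A + B) = blochVector A + blochVector B := by
  ext i; fin_cases i <;> simp [blochVector] <;> ring

lemma blochVector_sub (A B : Matrix (Fin 2) (Fin 2) ℂ) :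
    blochVector (A - B) = blochVector A - blochVector B := by
  ext i; fin_cases i <;> simp [blochVector] <;> ring

@[simp] lemma blochVector_one : blochVector 1 = 0 := by
  ext i; fin_cases i <;> simp [blochVector]

lemma Matrix.IsHermitian.im_apply_self {n : Type*} {A : Matrix n n ℂ} (hA : A.IsHermitian)
    (i : n) : (A i i).im = 0 :=
  conj_eq_iff_im.mp (hA.apply i i)

lemma norm_blochVector_sq {A : Matrix (Fin 2) (Fin 2) ℂ} (hA : A.IsHermitian) :
    ‖blochVector A‖ ^ 2 = A.trace.re ^ 2 - 4 * A.det.re := by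
  have h10 : A 1 0 = star (A 0 1) := (hA.apply 1 0).symm
  rw [EuclideanSpace.real_norm_sq_eq, Fin.sum_univ_three, trace_fin_two, det_fin_two, h10]
  simp [blochVector, hA.im_apply_self]
  ring

lemma Matrix.PosSemidef.norm_blochVector_le_trace {A : Matrix (Fin 2) (Fin 2) ℂ}
    (hA : A.PosSemidef) : ‖blochVector A‖ ≤ A.trace.re := by
  have hdet : 0 ≤ A.det.re := (nonneg_iff.mp hA.det_nonneg).1
  have htr : 0 ≤ A.trace.re := (nonneg_iff.mp hA.trace_nonneg).1
  refine le_of_sq_le_sq ?_ htr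
  nlinarith [norm_blochVector_sq hA.isHermitian]

lemma re_trace_mul_eq_inner_blochVector {A B : Matrix (Fin 2) (Fin 2) ℂ} (hA : A.IsHermitian)
    (hB : B.IsHermitian) :
    (A * B).trace.re = (A.trace.re * B.trace.re + ⟪blochVector A, blochVector B⟫_ℝ) / 2 := by
  have hA10 : A 1 0 = star (A 0 1) := (hA.apply 1 0).symm
  have hB10 : B 1 0 = star (B 0 1) := (hB.apply 1 0).symm
  simp [trace_fin_two, mul_apply, Fin.sum_univ_two, hA10, hB10, blochVector, PiLp.inner_apply,
    Fin.sum_univ_three, hA.im_apply_self, hB.im_apply_self]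
  ring

lemma Matrix.PosSemidef.norm_blochVector_le_one_of_add_eq_one {A B : Matrix (Fin 2) (Fin 2) ℂ}
    (hA : A.PosSemidef) (hB : B.PosSemidef) (hAB : A + B = 1) : ‖blochVector A‖ ≤ 1 := by
  have hBA : blochVector B = -blochVector A := by
    rw [eq_neg_iff_add_eq_zero, ← blochVector_add, add_comm, hAB, blochVector_one]
  have htr : A.trace.re + B.trace.re = 2 := by
    rw [← add_re, ← trace_add, hAB, trace_one]; simp
  have hB' := hB.norm_blochVector_le_trace
  rw [hBA, norm_neg] at hB'
  linarith [hA.norm_blochVector_le_trace]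

variable {γ : ℝ}

lemma ADC_eq (hγ0 : 0 ≤ γ) (hγ1 : γ ≤ 1) (ρ : Matrix (Fin 2) (Fin 2) ℂ) :
    ADC γ ρ = !![ρ 0 0 + γ * ρ 1 1, √(1 - γ) * ρ 0 1; √(1 - γ) * ρ 1 0, (1 - γ) * ρ 1 1] := by
  have hγ : (√γ : ℂ) * √γ = γ := by rw [← ofReal_mul, Real.mul_self_sqrt hγ0]
  have hγ' : (√(1 - γ) : ℂ) * √(1 - γ) = 1 - γ := by
    rw [← ofReal_mul, Real.mul_self_sqrt (by linarith)]; push_cast; rfl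
  ext i j
  fin_cases i <;> fin_cases j <;>
    simp [ADC, K₀, K₁, mul_apply, Fin.sum_univ_two, vecMul, dotProduct, conjTranspose_apply]
  · linear_combination ρ 1 1 * hγ
  · ring
  · linear_combination ρ 1 1 * hγ'

lemma trace_ADC (hγ0 : 0 ≤ γ) (hγ1 : γ ≤ 1) (ρ : Matrix (Fin 2) (Fin 2) ℂ) :
    (ADC γ ρ).trace = ρ.trace := by
  rw [ADC_eq hγ0 hγ1, trace_fin_two, trace_fin_two]
  simp; ring

lemma ADC_sub (A B : Matrix (Fin 2) (Fin 2) ℂ) : ADC γ (A - B) = ADC γ A - ADC γ B := by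
  simp only [ADC, Matrix.mul_sub, Matrix.sub_mul]; abel

lemma Matrix.IsHermitian.ADC {ρ : Matrix (Fin 2) (Fin 2) ℂ} (hρ : ρ.IsHermitian) :
    (ADC γ ρ).IsHermitian :=
  (isHermitian_mul_mul_conjTranspose _ hρ).add (isHermitian_mul_mul_conjTranspose _ hρ)

lemma blochVector_ADC (hγ0 : 0 ≤ γ) (hγ1 : γ ≤ 1) {X : Matrix (Fin 2) (Fin 2) ℂ}
    (hX : X.trace = 0) :
    blochVector (ADC γ X) =
      !₂[√(1 - γ) * blochVector X 0, √(1 - γ) * blochVector X 1, (1 - γ) * blochVector X 2] := by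
  have h00 : X 0 0 = -X 1 1 := by rw [trace_fin_two] at hX; linear_combination hX
  ext i; fin_cases i <;> simp [blochVector, ADC_eq hγ0 hγ1, h00] <;> ring

lemma norm_blochVector_ADC_le (hγ0 : 0 ≤ γ) (hγ1 : γ ≤ 1) {X : Matrix (Fin 2) (Fin 2) ℂ}
    (hX : X.trace = 0) : ‖blochVector (ADC γ X)‖ ≤ √(1 - γ) * ‖blochVector X‖ := by
  rw [← sq_le_sq₀ (norm_nonneg _) (by positivity), mul_pow, Real.sq_sqrt (by linarith),
    EuclideanSpace.real_norm_sq_eq, EuclideanSpace.real_norm_sq_eq, blochVector_ADC hγ0 hγ1 hX]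
  simp only [Fin.sum_univ_three, cons_val_zero, cons_val_one, cons_val_two, head_cons, tail_cons,
    mul_pow, Real.sq_sqrt (by linarith : 0 ≤ 1 - γ)]
  nlinarith [sq_nonneg (blochVector X 2), mul_nonneg hγ0 (sq_nonneg (blochVector X 2))]

noncomputable def successProb (γ : ℝ) (ρ₀ ρ₁ Λ₀ Λ₁ : Matrix (Fin 2) (Fin 2) ℂ) : ℝ :=
  (1/2) * (Λ₀ * ADC γ ρ₀).trace.re + (1/2) * (Λ₁ * ADC γ ρ₁).trace.re

lemma successProb_eq (hγ0 : 0 ≤ γ) (hγ1 : γ ≤ 1) {ρ₀ ρ₁ Λ₀ Λ₁ : Matrix (Fin 2) (Fin 2) ℂ}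
    (hρ₀ : ρ₀.IsHermitian) (hρ₁ : ρ₁.IsHermitian) (htr₀ : ρ₀.trace = 1) (htr₁ : ρ₁.trace = 1)
    (hΛ₀ : Λ₀.IsHermitian) (hΛ : Λ₀ + Λ₁ = 1) :
    successProb γ ρ₀ ρ₁ Λ₀ Λ₁ =
      1/2 + ⟪blochVector Λ₀, blochVector (ADC γ (ρ₀ - ρ₁))⟫_ℝ / 4 := by
  have hΛ₁ : Λ₁ = 1 - Λ₀ := eq_sub_of_add_eq' hΛ
  have htr : (ρ₀ - ρ₁).trace = 0 := by rw [trace_sub, htr₀, htr₁, sub_self]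
  have hsplit : (Λ₀ * ADC γ ρ₀).trace.re + (Λ₁ * ADC γ ρ₁).trace.re =
      1 + (Λ₀ * ADC γ (ρ₀ - ρ₁)).trace.re := by
    rw [hΛ₁, ADC_sub, Matrix.sub_mul, Matrix.one_mul, Matrix.mul_sub, trace_sub, trace_sub,
      trace_ADC hγ0 hγ1, htr₁]
    simp only [sub_re, one_re]; ring
  rw [successProb, ← mul_add, hsplit, re_trace_mul_eq_inner_blochVector hΛ₀ (hρ₀.sub hρ₁).ADC,
    trace_ADC hγ0 hγ1, htr]
  simp only [zero_re, mul_zero, zero_add]; ring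

lemma successProb_le (hγ0 : 0 ≤ γ) (hγ1 : γ ≤ 1) {ρ₀ ρ₁ Λ₀ Λ₁ : Matrix (Fin 2) (Fin 2) ℂ}
    (hρ₀ : ρ₀.PosSemidef) (hρ₁ : ρ₁.PosSemidef) (htr₀ : ρ₀.trace = 1) (htr₁ : ρ₁.trace = 1)
    (hΛ₀ : Λ₀.PosSemidef) (hΛ₁ : Λ₁.PosSemidef) (hΛ : Λ₀ + Λ₁ = 1) :
    successProb γ ρ₀ ρ₁ Λ₀ Λ₁ ≤ (1 + √(1 - γ)) / 2 := by
  have htr : (ρ₀ - ρ₁).trace = 0 := by rw [trace_sub, htr₀, htr₁, sub_self]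
  have hnorm : ‖blochVector (ρ₀ - ρ₁)‖ ≤ 2 := by
    have h₀ := hρ₀.norm_blochVector_le_trace
    have h₁ := hρ₁.norm_blochVector_le_trace
    rw [htr₀, one_re] at h₀
    rw [htr₁, one_re] at h₁
    rw [blochVector_sub]
    linarith [norm_sub_le (blochVector ρ₀) (blochVector ρ₁)]
  have hinner : ⟪blochVector Λ₀, blochVector (ADC γ (ρ₀ - ρ₁))⟫_ℝ ≤ 2 * √(1 - γ) :=
    calc ⟪blochVector Λ₀, blochVector (ADC γ (ρ₀ - ρ₁))⟫_ℝ
        ≤ ‖blochVector Λ₀‖ * ‖blochVector (ADC γ (ρ₀ - ρ₁))‖ := real_inner_le_norm _ _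
      _ ≤ 1 * (√(1 - γ) * 2) := by
        gcongr
        · exact hΛ₀.norm_blochVector_le_one_of_add_eq_one hΛ₁ hΛ
        · exact (norm_blochVector_ADC_le hγ0 hγ1 htr).trans (by gcongr)
      _ = 2 * √(1 - γ) := by ring
  rw [successProb_eq hγ0 hγ1 hρ₀.isHermitian hρ₁.isHermitian htr₀ htr₁ hΛ₀.isHermitian hΛ]
  linarith

lemma posSemidef_ρPlus : ρPlus.PosSemidef := by
  have h : ρPlus = (1/2 : ℂ) • vecMulVec ![1, 1] (star ![1, 1]) := by
    ext i j; fin_cases i <;> fin_cases j <;> simp [ρPlus, vecMulVec]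
  rw [h]
  exact (posSemidef_vecMulVec_self_star _).smul (by norm_num [nonneg_iff])

lemma posSemidef_ρMinus : ρMinus.PosSemidef := by
  have h : ρMinus = (1/2 : ℂ) • vecMulVec ![1, -1] (star ![1, -1]) := by
    ext i j; fin_cases i <;> fin_cases j <;> simp [ρMinus, vecMulVec]
  rw [h]
  exact (posSemidef_vecMulVec_self_star _).smul (by norm_num [nonneg_iff])

lemma trace_ρPlus : ρPlus.trace = 1 := by simp [ρPlus, trace_fin_two]; norm_num

lemma trace_ρMinus : ρMinus.trace = 1 := by simp [ρMinus, trace_fin_two]; norm_num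

lemma ρPlus_add_ρMinus : ρPlus + ρMinus = 1 := by
  ext i j; fin_cases i <;> fin_cases j <;> simp [ρPlus, ρMinus, one_apply] <;> norm_num

lemma blochVector_ρPlus : blochVector ρPlus = !₂[1, 0, 0] := by
  ext i; fin_cases i <;> simp [blochVector, ρPlus]

lemma blochVector_ρPlus_sub_ρMinus : blochVector (ρPlus - ρMinus) = !₂[2, 0, 0] := by
  ext i; fin_cases i <;> simp [blochVector, ρPlus, ρMinus]; norm_num

lemma successProb_ρPlus_ρMinus (hγ0 : 0 ≤ γ) (hγ1 : γ ≤ 1) :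
    successProb γ ρPlus ρMinus ρPlus ρMinus = (1 + √(1 - γ)) / 2 := by
  have htr : (ρPlus - ρMinus).trace = 0 := by rw [trace_sub, trace_ρPlus, trace_ρMinus, sub_self]
  rw [successProb_eq hγ0 hγ1 posSemidef_ρPlus.isHermitian posSemidef_ρMinus.isHermitian
    trace_ρPlus trace_ρMinus posSemidef_ρPlus.isHermitian ρPlus_add_ρMinus,
    blochVector_ADC hγ0 hγ1 htr, blochVector_ρPlus, blochVector_ρPlus_sub_ρMinus]
  simp [PiLp.inner_apply, Fin.sum_univ_three]
  ring

/-- For every `γ ∈ [0,1]`, the best possible average success probability over all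
pairs of qubit density matrices and all two-outcome POVMs on `ℂ²` equals `(1 + √(1−γ))/2`,
and it is attained by `ρ₀ = Λ₀ = ρ₊`, `ρ₁ = Λ₁ = ρ₋`. -/
theorem stmt0 (γ : ℝ) (hγ0 : 0 ≤ γ) (hγ1 : γ ≤ 1) :
    IsGreatest
      {v : ℝ | ∃ ρ₀ ρ₁ Λ₀ Λ₁ : Matrix (Fin 2) (Fin 2) ℂ,
        ρ₀.PosSemidef ∧ ρ₀.trace = 1 ∧ ρ₁.PosSemidef ∧ ρ₁.trace = 1 ∧
        Λ₀.PosSemidef ∧ Λ₁.PosSemidef ∧ Λ₀ + Λ₁ = 1 ∧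
        v = (1/2) * (Λ₀ * ADC γ ρ₀).trace.re + (1/2) * (Λ₁ * ADC γ ρ₁).trace.re}
      ((1 + Real.sqrt (1 - γ)) / 2) ∧
    (1/2) * (ρPlus * ADC γ ρPlus).trace.re + (1/2) * (ρMinus * ADC γ ρMinus).trace.re
      = (1 + Real.sqrt (1 - γ)) / 2 := by
  have hopt := successProb_ρPlus_ρMinus hγ0 hγ1
  refine ⟨⟨⟨ρPlus, ρMinus, ρPlus, ρMinus, posSemidef_ρPlus, trace_ρPlus, posSemidef_ρMinus,
    trace_ρMinus, posSemidef_ρPlus, posSemidef_ρMinus, ρPlus_add_ρMinus, hopt.symm⟩, ?_⟩, hopt⟩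
  rintro v ⟨ρ₀, ρ₁, Λ₀, Λ₁, hρ₀, htr₀, hρ₁, htr₁, hΛ₀, hΛ₁, hΛ, rfl⟩
  exact successProb_le hγ0 hγ1 hρ₀ hρ₁ htr₀ htr₁ hΛ₀ hΛ₁ hΛ
end

section
/- (Helstrom bound, upper bound) Let d ≥ 1 and let σ₀, σ₁ be d×d complex density matrices. For every two-outcome POVM (Λ₀, Λ₁) on ℂ^d, (1/2)·Re Tr(Λ₀ σ₀) + (1/2)·Re Tr(Λ₁ σ₁) ≤ 1/2 + (1/4)·Σ_i |λ_i|, where λ_1, …, λ_d are the eigenvalues of the Hermitian matrix σ₀ − σ₁. -/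
open Matrix Complex
open scoped ComplexOrder

/-! Writing `Λ₁ = 1 - Λ₀` and using `Tr σ₁ = 1`, the success probability equals
`1/2 + (1/2)·Re Tr(Λ₀ (σ₀ - σ₁))`. In an eigenbasis of `Δ = σ₀ - σ₁` this trace is
`∑ᵢ mᵢ λᵢ` with `mᵢ ∈ [0, 1]` the diagonal entries of `Λ₀`, since both `Λ₀` and `1 - Λ₀` are
positive semidefinite; hence it is at most `∑ᵢ max λᵢ 0 = (∑ᵢ |λᵢ| + ∑ᵢ λᵢ) / 2`, and
`∑ᵢ λᵢ = Tr Δ = 0`. -/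

lemma mul_le_abs_add_div_two {m x : ℝ} (hm₀ : 0 ≤ m) (hm₁ : m ≤ 1) :
    m * x ≤ (|x| + x) / 2 := by
  rcases le_total 0 x with hx | hx
  · rw [abs_of_nonneg hx]; nlinarith
  · rw [abs_of_nonpos hx]; nlinarith

namespace Matrix

variable {𝕜 n : Type*} [RCLike 𝕜] [Fintype n] [DecidableEq n] {A B : Matrix n n 𝕜}

lemma IsHermitian.trace_mul_eq_sum_diag_mul_eigenvalues (hA : A.IsHermitian)
    (B : Matrix n n 𝕜) :
    (B * A).trace = ∑ i, (star (hA.eigenvectorUnitary : Matrix n n 𝕜) * B *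
      hA.eigenvectorUnitary) i i * hA.eigenvalues i := by
  set U : Matrix n n 𝕜 := (hA.eigenvectorUnitary : Matrix n n 𝕜)
  conv_lhs => rw [hA.spectral_theorem, Unitary.conjStarAlgAut_apply]
  rw [show B * (U * diagonal (RCLike.ofReal ∘ hA.eigenvalues) * star U)
      = B * U * diagonal (RCLike.ofReal ∘ hA.eigenvalues) * star U by noncomm_ring,
    trace_mul_comm, ← Matrix.mul_assoc, ← Matrix.mul_assoc]
  simp [trace, mul_diagonal]

lemma IsHermitian.re_trace_mul_le (hA : A.IsHermitian) (hB₀ : B.PosSemidef)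
    (hB₁ : (1 - B).PosSemidef) :
    RCLike.re (B * A).trace ≤ (∑ i, |hA.eigenvalues i| + ∑ i, hA.eigenvalues i) / 2 := by
  set U : Matrix n n 𝕜 := (hA.eigenvectorUnitary : Matrix n n 𝕜)
  have hM₀ := hB₀.conjTranspose_mul_mul_same U
  have hM₁ : (1 - Uᴴ * B * U).PosSemidef := by
    have hUU : Uᴴ * U = 1 := Unitary.coe_star_mul_self hA.eigenvectorUnitary
    simpa [Matrix.sub_mul, Matrix.mul_sub, hUU] using hB₁.conjTranspose_mul_mul_same U
  have hdiag (i : n) : 0 ≤ RCLike.re ((Uᴴ * B * U) i i) ∧ RCLike.re ((Uᴴ * B * U) i i) ≤ 1 := by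
    have h₁ := (RCLike.nonneg_iff.mp (hM₁.diag_nonneg (i := i))).1
    simp only [sub_apply, one_apply_eq, map_sub, RCLike.one_re, sub_nonneg] at h₁
    exact ⟨(RCLike.nonneg_iff.mp hM₀.diag_nonneg).1, h₁⟩
  rw [hA.trace_mul_eq_sum_diag_mul_eigenvalues, map_sum, ← Finset.sum_add_distrib,
    Finset.sum_div]
  refine Finset.sum_le_sum fun i _ => ?_
  rw [RCLike.re_mul_ofReal]
  exact mul_le_abs_add_div_two (hdiag i).1 (hdiag i).2

end Matrix

theorem stmt5_general (d : ℕ)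
    (σ₀ σ₁ : Matrix (Fin d) (Fin d) ℂ)
    (hσ₀t : σ₀.trace = 1)
    (hσ₁t : σ₁.trace = 1)
    (Λ₀ Λ₁ : Matrix (Fin d) (Fin d) ℂ)
    (hΛ₀ : Λ₀.PosSemidef) (hΛ₁ : Λ₁.PosSemidef) (hΛ : Λ₀ + Λ₁ = 1)
    (hH : (σ₀ - σ₁).IsHermitian) :
    (1/2) * (Λ₀ * σ₀).trace.re + (1/2) * (Λ₁ * σ₁).trace.re
      ≤ 1/2 + (1/4) * ∑ i, |hH.eigenvalues i| := by
  have hΛ₁_eq : Λ₁ = 1 - Λ₀ := eq_sub_of_add_eq' hΛ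
  have hsuccess : (Λ₀ * σ₀).trace.re + (Λ₁ * σ₁).trace.re
      = 1 + (Λ₀ * (σ₀ - σ₁)).trace.re := by
    simp only [hΛ₁_eq, Matrix.sub_mul, Matrix.mul_sub, Matrix.one_mul, trace_sub, hσ₁t, sub_re,
      one_re]
    ring
  have hsum : ∑ i, hH.eigenvalues i = 0 := by
    have h := hH.trace_eq_sum_eigenvalues
    rw [trace_sub, hσ₀t, hσ₁t, sub_self] at h
    simpa using (congrArg re h).symm
  have hbound : (Λ₀ * (σ₀ - σ₁)).trace.re ≤ (∑ i, |hH.eigenvalues i|) / 2 := by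
    simpa [hsum] using hH.re_trace_mul_le hΛ₀ (hΛ₁_eq ▸ hΛ₁)
  linarith

/-- Helstrom bound, upper bound: for `d×d` density matrices `σ₀, σ₁` and any
two-outcome POVM `(Λ₀, Λ₁)` on `ℂ^d`,
`(1/2)·Re Tr(Λ₀σ₀) + (1/2)·Re Tr(Λ₁σ₁) ≤ 1/2 + (1/4)·Σᵢ |λᵢ|`, where the `λᵢ` are the
eigenvalues of the Hermitian matrix `σ₀ − σ₁`. -/
theorem stmt5 (d : ℕ) (hd : 1 ≤ d)
    (σ₀ σ₁ : Matrix (Fin d) (Fin d) ℂ)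
    (hσ₀ : σ₀.PosSemidef) (hσ₀t : σ₀.trace = 1)
    (hσ₁ : σ₁.PosSemidef) (hσ₁t : σ₁.trace = 1)
    (Λ₀ Λ₁ : Matrix (Fin d) (Fin d) ℂ)
    (hΛ₀ : Λ₀.PosSemidef) (hΛ₁ : Λ₁.PosSemidef) (hΛ : Λ₀ + Λ₁ = 1)
    (hH : (σ₀ - σ₁).IsHermitian) :
    (1/2) * (Λ₀ * σ₀).trace.re + (1/2) * (Λ₁ * σ₁).trace.re
      ≤ 1/2 + (1/4) * ∑ i, |hH.eigenvalues i| :=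
  stmt5_general d σ₀ σ₁ hσ₀t hσ₁t Λ₀ Λ₁ hΛ₀ hΛ₁ hΛ hH
end

section
/- (Helstrom bound, achievability) Let d ≥ 1 and let σ₀, σ₁ be d×d complex density matrices. There exists a two-outcome POVM (Λ₀, Λ₁) on ℂ^d such that (1/2)·Re Tr(Λ₀ σ₀) + (1/2)·Re Tr(Λ₁ σ₁) = 1/2 + (1/4)·Σ_i |λ_i|, where λ_1, …, λ_d are the eigenvalues of the Hermitian matrix σ₀ − σ₁. -/
open Matrix Complex
open scoped ComplexOrder

/-- Helstrom bound, achievability: for `d×d` density matrices `σ₀, σ₁` there is a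
two-outcome POVM `(Λ₀, Λ₁)` on `ℂ^d` with
`(1/2)·Re Tr(Λ₀σ₀) + (1/2)·Re Tr(Λ₁σ₁) = 1/2 + (1/4)·Σᵢ |λᵢ|`, where the `λᵢ` are the
eigenvalues of the Hermitian matrix `σ₀ − σ₁`. -/
theorem stmt6 (d : ℕ) (hd : 1 ≤ d)
    (σ₀ σ₁ : Matrix (Fin d) (Fin d) ℂ)
    (hσ₀ : σ₀.PosSemidef) (hσ₀t : σ₀.trace = 1)
    (hσ₁ : σ₁.PosSemidef) (hσ₁t : σ₁.trace = 1)
    (hH : (σ₀ - σ₁).IsHermitian) :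
    ∃ Λ₀ Λ₁ : Matrix (Fin d) (Fin d) ℂ,
      Λ₀.PosSemidef ∧ Λ₁.PosSemidef ∧ Λ₀ + Λ₁ = 1 ∧
      (1/2) * (Λ₀ * σ₀).trace.re + (1/2) * (Λ₁ * σ₁).trace.re
        = 1/2 + (1/4) * ∑ i, |hH.eigenvalues i| := by
  set U : Matrix (Fin d) (Fin d) ℂ := ↑(hH.eigenvectorUnitary) with hU
  set lam := hH.eigenvalues with hlam
  set p : Fin d → ℂ := fun i => if 0 ≤ lam i then 1 else 0 with hp
  have hUU : U * Uᴴ = 1 := by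
    rw [hU, ← Matrix.star_eq_conjTranspose]
    exact (Matrix.mem_unitaryGroup_iff).mp hH.eigenvectorUnitary.2
  have hUU' : Uᴴ * U = 1 := by
    rw [hU, ← Matrix.star_eq_conjTranspose]
    exact (Matrix.mem_unitaryGroup_iff').mp hH.eigenvectorUnitary.2
  have hspec : σ₀ - σ₁ = U * diagonal (RCLike.ofReal ∘ lam) * Uᴴ := by
    simpa [hU, hlam, ← Matrix.star_eq_conjTranspose] using hH.spectral_theorem
  refine ⟨U * diagonal p * Uᴴ, U * diagonal (fun i => 1 - p i) * Uᴴ, ?_, ?_, ?_, ?_⟩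
  · exact (posSemidef_diagonal_iff.mpr (fun i => by
      simp only [hp]; split <;> norm_num)).mul_mul_conjTranspose_same U
  · exact (posSemidef_diagonal_iff.mpr (fun i => by
      simp only [hp]; split <;> norm_num)).mul_mul_conjTranspose_same U
  · rw [← add_mul, ← mul_add, diagonal_add]
    have : (fun i => p i + (1 - p i)) = fun _ => (1 : ℂ) := by funext i; ring
    rw [this, diagonal_one, Matrix.mul_one, hUU]
  · have key : ∀ q : Fin d → ℂ, ((U * diagonal q * Uᴴ) * (σ₀ - σ₁)).trace
        = ∑ i, q i * (lam i : ℂ) := by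
      intro q
      rw [hspec, show U * diagonal q * Uᴴ * (U * diagonal (RCLike.ofReal ∘ lam) * Uᴴ)
          = U * (diagonal q * (Uᴴ * U) * diagonal (RCLike.ofReal ∘ lam)) * Uᴴ by
        noncomm_ring]
      rw [hUU', Matrix.mul_one, Matrix.trace_mul_cycle, ← Matrix.mul_assoc, hUU',
        Matrix.one_mul, diagonal_mul_diagonal, trace_diagonal]
      simp
    -- trace identities
    have hΛ₁ : ((U * diagonal (fun i => 1 - p i) * Uᴴ) * σ₁).trace
        = 1 - ((U * diagonal p * Uᴴ) * σ₁).trace := by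
      have h1 : U * diagonal (fun i => 1 - p i) * Uᴴ = 1 - U * diagonal p * Uᴴ := by
        have hd1 : diagonal (fun i => 1 - p i) = 1 - diagonal p := by
          ext i j
          rcases eq_or_ne i j with rfl | hij
          · simp [Matrix.one_apply_eq]
          · simp [Matrix.diagonal_apply_ne _ hij, Matrix.one_apply_ne hij]
        rw [hd1, Matrix.mul_sub, Matrix.sub_mul, Matrix.mul_one, hUU]
      rw [h1, Matrix.sub_mul, Matrix.one_mul, trace_sub, hσ₁t]
    have hdiff : ((U * diagonal p * Uᴴ) * σ₀).trace - ((U * diagonal p * Uᴴ) * σ₁).trace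
        = ∑ i, p i * (lam i : ℂ) := by
      rw [← key p, Matrix.mul_sub, trace_sub]
    have hsum0 : ∑ i, (lam i : ℝ) = 0 := by
      have := key (fun _ => 1)
      rw [show U * diagonal (fun _ => (1:ℂ)) * Uᴴ = 1 by
        rw [diagonal_one, Matrix.mul_one, hUU], Matrix.one_mul, trace_sub,
        hσ₀t, hσ₁t, sub_self] at this
      have h2 : (0:ℂ) = ∑ i, (lam i : ℂ) := by simpa using this
      have := congrArg Complex.re h2.symm
      simpa using this
    have hps : (∑ i, p i * (lam i : ℂ)).re = ∑ i, max (lam i) 0 := by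
      rw [Complex.re_sum]
      congr 1; funext i
      simp only [hp]
      by_cases h : 0 ≤ lam i
      · rw [if_pos h, one_mul, Complex.ofReal_re, max_eq_left h]
      · push_neg at h
        rw [if_neg (not_le.mpr h), zero_mul, max_eq_right h.le]
        exact Complex.zero_re
    have habs : ∑ i, |lam i| = 2 * ∑ i, max (lam i) 0 := by
      have : ∀ i, |lam i| = 2 * max (lam i) 0 - lam i := by
        intro i
        rcases le_or_gt 0 (lam i) with h | h
        · rw [_root_.abs_of_nonneg h, max_eq_left h]; ring
        · rw [_root_.abs_of_neg h, max_eq_right (le_of_lt h)]; ring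
      simp_rw [this]
      rw [Finset.sum_sub_distrib, hsum0, sub_zero, Finset.mul_sum]
    -- finish
    rw [hΛ₁]
    have hre : ((U * diagonal p * Uᴴ) * σ₀).trace.re - ((U * diagonal p * Uᴴ) * σ₁).trace.re
        = ∑ i, max (lam i) 0 := by
      rw [← Complex.sub_re, hdiff, hps]
    rw [Complex.sub_re, Complex.one_re]
    rw [habs]
    linarith [hre]
end

section
/- (Sufficiency of the Holevo–Yuen–Kennedy–Lax conditions) Let d, M ≥ 1, let σ_1, …, σ_M be d×d density matrices, let p_1, …, p_M be nonnegative reals, and let (Λ_1, …, Λ_M) be a POVM on ℂ^d. Suppose the matrix Y := Σ_m p_m · σ_m · Λ_m is Hermitian and that Y − p_k · σ_k is positive semidefinite for every k ∈ {1, …, M}. Then for every POVM (Λ'_1, …, Λ'_M) on ℂ^d, Σ_m p_m · Re Tr(Λ'_m σ_m) ≤ Σ_m p_m · Re Tr(Λ_m σ_m); i.e., the POVM (Λ_1, …, Λ_M) maximizes the average success probability for the ensemble {(p_m, σ_m)}. -/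
open Matrix Complex
open scoped ComplexOrder

/-!
For any POVM `Λ'`, each term `Tr(Λ'ₘ (Y - pₘσₘ))` is nonnegative, being the trace of a product
of two positive semidefinite matrices; summing over `m` and using `Σ Λ'ₘ = 1` gives
`Σ pₘ Tr(Λ'ₘσₘ) ≤ Tr Y`, and `Tr Y` is exactly the success probability of `Λ`.
-/

namespace Matrix

variable {n 𝕜 : Type*} [Fintype n] [DecidableEq n] [RCLike 𝕜]

open scoped MatrixOrder in
theorem PosSemidef.trace_mul_nonneg {A B : Matrix n n 𝕜} (hA : A.PosSemidef)
    (hB : B.PosSemidef) : 0 ≤ (A * B).trace := by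
  set S := CFC.sqrt B
  have hS : Sᴴ = S := (CFC.sqrt_nonneg B).posSemidef.isHermitian.eq
  have hcyc : (A * B).trace = (Sᴴ * A * S).trace := by
    rw [hS, ← CFC.sqrt_mul_sqrt_self B hB.nonneg, ← Matrix.mul_assoc, trace_mul_comm,
      Matrix.mul_assoc]
  exact hcyc ▸ (hA.conjTranspose_mul_mul_same S).trace_nonneg

theorem sum_trace_mul_le_trace_of_posSemidef_sub {ι : Type*} [Fintype ι] {Y : Matrix n n 𝕜}
    {A B : ι → Matrix n n 𝕜} (hA : ∀ i, (A i).PosSemidef) (hA_sum : ∑ i, A i = 1)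
    (hB : ∀ i, (Y - B i).PosSemidef) : ∑ i, (A i * B i).trace ≤ Y.trace := by
  have hgap : 0 ≤ ∑ i, (A i * (Y - B i)).trace :=
    Finset.sum_nonneg fun i _ ↦ (hA i).trace_mul_nonneg (hB i)
  have hsplit : ∑ i, (A i * (Y - B i)).trace = Y.trace - ∑ i, (A i * B i).trace := by
    simp only [Matrix.mul_sub, trace_sub, Finset.sum_sub_distrib]
    rw [← trace_sum, ← Finset.sum_mul, hA_sum, Matrix.one_mul]
  rwa [hsplit, sub_nonneg] at hgap

end Matrix

theorem stmt7_general (d M : ℕ)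
    (σ : Fin M → Matrix (Fin d) (Fin d) ℂ)
    (p : Fin M → ℝ)
    (Λ : Fin M → Matrix (Fin d) (Fin d) ℂ)
    (hYk : ∀ k, ((∑ m, (p m : ℂ) • (σ m * Λ m)) - (p k : ℂ) • σ k).PosSemidef)
    (Λ' : Fin M → Matrix (Fin d) (Fin d) ℂ)
    (hΛ' : ∀ m, (Λ' m).PosSemidef) (hΛ'sum : ∑ m, Λ' m = 1) :
    ∑ m, p m * (Λ' m * σ m).trace.re ≤ ∑ m, p m * (Λ m * σ m).trace.re := by
  have key := sum_trace_mul_le_trace_of_posSemidef_sub hΛ' hΛ'sum hYk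
  have hlhs : ∑ m, p m * (Λ' m * σ m).trace.re
      = (∑ m, (Λ' m * ((p m : ℂ) • σ m)).trace).re := by
    simp [Complex.re_sum, trace_smul]
  have hrhs : ∑ m, p m * (Λ m * σ m).trace.re
      = (∑ m, (p m : ℂ) • (σ m * Λ m)).trace.re := by
    simp [Complex.re_sum, trace_sum, trace_smul, trace_mul_comm (σ _)]
  rw [hlhs, hrhs]
  exact (Complex.le_def.mp key).1

/-- sufficiency of the Holevo–Yuen–Kennedy–Lax conditions: if
`Y = Σₘ pₘ σₘ Λₘ` is Hermitian and `Y − pₖ σₖ` is positive semidefinite for every `k`, then the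
POVM `(Λ₁, …, Λ_M)` maximizes the average success probability for the ensemble `{(pₘ, σₘ)}`. -/
theorem stmt7 (d M : ℕ) (hd : 1 ≤ d) (hM : 1 ≤ M)
    (σ : Fin M → Matrix (Fin d) (Fin d) ℂ)
    (hσ : ∀ m, (σ m).PosSemidef ∧ (σ m).trace = 1)
    (p : Fin M → ℝ) (hp : ∀ m, 0 ≤ p m)
    (Λ : Fin M → Matrix (Fin d) (Fin d) ℂ)
    (hΛ : ∀ m, (Λ m).PosSemidef) (hΛsum : ∑ m, Λ m = 1)
    (hYH : (∑ m, (p m : ℂ) • (σ m * Λ m)).IsHermitian)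
    (hYk : ∀ k, ((∑ m, (p m : ℂ) • (σ m * Λ m)) - (p k : ℂ) • σ k).PosSemidef)
    (Λ' : Fin M → Matrix (Fin d) (Fin d) ℂ)
    (hΛ' : ∀ m, (Λ' m).PosSemidef) (hΛ'sum : ∑ m, Λ' m = 1) :
    ∑ m, p m * (Λ' m * σ m).trace.re ≤ ∑ m, p m * (Λ m * σ m).trace.re :=
  stmt7_general d M σ p Λ hYk Λ' hΛ' hΛ'sum
end

section
/- Let d, q ≥ 1, let σ_0, …, σ_{q−1} be d×d density matrices, and let (Λ_0, …, Λ_{q−1}) be a POVM on ℂ^d such that Y := (1/q)·Σ_x σ_x Λ_x is Hermitian and Y − (1/q)·σ_y is positive semidefinite for every y ∈ {0, …, q−1}. For n ≥ 1 and a string x ∈ {0, …, q−1}^n, let σ^{(n)}_x be the matrix indexed by (Fin n → Fin d) × (Fin n → Fin d) with entries σ^{(n)}_x(u, v) = ∏_{j=1}^n σ_{x_j}(u_j, v_j), and let Y^{(n)} be the matrix with entries Y^{(n)}(u, v) = ∏_{j=1}^n Y(u_j, v_j). Then Y^{(n)} is Hermitian and Y^{(n)} − q^{−n}·σ^{(n)}_x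 is positive semidefinite for every x ∈ {0, …, q−1}^n; i.e., the n-fold tensor-power POVM satisfies the Holevo–Yuen–Kennedy–Lax sufficient optimality conditions for the product ensemble. -/
open Matrix Complex
open scoped ComplexOrder

/-- The `n`-fold tensor power of a `d×d` matrix, realized as a matrix indexed by
`Fin n → Fin d` with entrywise products. -/
noncomputable def tensorPow {d : ℕ} (n : ℕ) (Y : Matrix (Fin d) (Fin d) ℂ) :
    Matrix (Fin n → Fin d) (Fin n → Fin d) ℂ :=
  Matrix.of fun u v => ∏ j, Y (u j) (v j)

/-- The tensor product `σ_{x₁} ⊗ ⋯ ⊗ σ_{xₙ}` of states along a string `x`. -/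
noncomputable def tensorString {d q : ℕ} (n : ℕ) (σ : Fin q → Matrix (Fin d) (Fin d) ℂ)
    (x : Fin n → Fin q) : Matrix (Fin n → Fin d) (Fin n → Fin d) ℂ :=
  Matrix.of fun u v => ∏ j, σ (x j) (u j) (v j)

open scoped Kronecker

/-!
Since `σ_y ⪰ 0`, the condition `Y ⪰ q⁻¹ σ_y` forces `Y ⪰ 0`, hence `Y^{⊗n} ⪰ 0`. Splitting off the
first tensor factor,
`Y ⊗ Y^{⊗n} - q^{-(n+1)} σ_{x₀} ⊗ σ_{x'} = (Y - q⁻¹ σ_{x₀}) ⊗ Y^{⊗n} + q⁻¹ σ_{x₀} ⊗ (Y^{⊗n} - q^{-n} σ_{x'})`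
is a sum of Kronecker products of positive semidefinite matrices, which gives the claim by
induction on `n`.
-/

section TensorPower

variable {d q : ℕ}

lemma conjTranspose_tensorPow (n : ℕ) (Y : Matrix (Fin d) (Fin d) ℂ) :
    (tensorPow n Y)ᴴ = tensorPow n Yᴴ := by
  ext u v
  simp [tensorPow, conjTranspose_apply]

lemma tensorPow_isHermitian {Y : Matrix (Fin d) (Fin d) ℂ} (hY : Y.IsHermitian) (n : ℕ) :
    (tensorPow n Y).IsHermitian := by
  rw [IsHermitian, conjTranspose_tensorPow, hY.eq]

abbrev splitHead (d n : ℕ) : (Fin (n + 1) → Fin d) → Fin d × (Fin n → Fin d) :=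
  (Fin.consEquiv fun _ => Fin d).symm

lemma tensorPow_succ (n : ℕ) (Y : Matrix (Fin d) (Fin d) ℂ) :
    tensorPow (n + 1) Y = (Y ⊗ₖ tensorPow n Y).submatrix (splitHead d n) (splitHead d n) := by
  ext u v
  simp [tensorPow, Fin.prod_univ_succ, Fin.tail]

lemma tensorString_succ (n : ℕ) (σ : Fin q → Matrix (Fin d) (Fin d) ℂ) (x : Fin (n + 1) → Fin q) :
    tensorString (n + 1) σ x =
      (σ (x 0) ⊗ₖ tensorString n σ (Fin.tail x)).submatrix (splitHead d n) (splitHead d n) := by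
  ext u v
  simp [tensorString, Fin.prod_univ_succ, Fin.tail]

lemma tensorPow_posSemidef {Y : Matrix (Fin d) (Fin d) ℂ} (hY : Y.PosSemidef) (n : ℕ) :
    (tensorPow n Y).PosSemidef := by
  induction n with
  | zero =>
    have h_one : tensorPow 0 Y = 1 := by
      ext u v
      simp [tensorPow, one_apply, Subsingleton.elim u v]
    exact h_one ▸ PosSemidef.one
  | succ n ih =>
    rw [tensorPow_succ]
    exact (hY.kronecker ih).submatrix _

lemma tensorPow_sub_smul_tensorString_succ (n : ℕ) (c : ℂ) (Y : Matrix (Fin d) (Fin d) ℂ)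
    (σ : Fin q → Matrix (Fin d) (Fin d) ℂ) (x : Fin (n + 1) → Fin q) :
    tensorPow (n + 1) Y - c ^ (n + 1) • tensorString (n + 1) σ x =
      ((Y - c • σ (x 0)) ⊗ₖ tensorPow n Y +
        (c • σ (x 0)) ⊗ₖ (tensorPow n Y - c ^ n • tensorString n σ (Fin.tail x))).submatrix
        (splitHead d n) (splitHead d n) := by
  rw [tensorPow_succ, tensorString_succ]
  ext u v
  simp only [Matrix.sub_apply, Matrix.smul_apply, Matrix.add_apply, submatrix_apply,
    kroneckerMap_apply, smul_eq_mul]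
  ring

theorem tensorPow_sub_smul_tensorString_posSemidef {c : ℂ} (hc : 0 ≤ c)
    {Y : Matrix (Fin d) (Fin d) ℂ} {σ : Fin q → Matrix (Fin d) (Fin d) ℂ}
    (hσ : ∀ y, (σ y).PosSemidef) (hY : ∀ y, (Y - c • σ y).PosSemidef) (n : ℕ) :
    ∀ x : Fin n → Fin q, (tensorPow n Y - c ^ n • tensorString n σ x).PosSemidef := by
  induction n with
  | zero =>
    intro x
    have h_zero : tensorPow 0 Y - c ^ 0 • tensorString 0 σ x = 0 := by
      ext u v
      simp [tensorPow, tensorString]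
    exact h_zero ▸ PosSemidef.zero
  | succ n ih =>
    intro x
    have hσc : (c • σ (x 0)).PosSemidef := (hσ (x 0)).smul hc
    have hY_psd : Y.PosSemidef := by simpa using (hY (x 0)).add hσc
    rw [tensorPow_sub_smul_tensorString_succ]
    exact (((hY (x 0)).kronecker (tensorPow_posSemidef hY_psd n)).add
      (hσc.kronecker (ih (Fin.tail x)))).submatrix _

end TensorPower

theorem stmt9_general (d q n : ℕ)
    (σ : Fin q → Matrix (Fin d) (Fin d) ℂ)
    (hσ : ∀ x, (σ x).PosSemidef ∧ (σ x).trace = 1)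
    (Y : Matrix (Fin d) (Fin d) ℂ)
    (hYH : Y.IsHermitian)
    (hYopt : ∀ y : Fin q, (Y - (q : ℂ)⁻¹ • σ y).PosSemidef) :
    (tensorPow n Y).IsHermitian ∧
    ∀ x : Fin n → Fin q,
      (tensorPow n Y - ((q : ℂ) ^ n)⁻¹ • tensorString n σ x).PosSemidef := by
  refine ⟨tensorPow_isHermitian hYH n, fun x => ?_⟩
  rw [← inv_pow]
  exact tensorPow_sub_smul_tensorString_posSemidef (by positivity) (fun y => (hσ y).1) hYopt n x

/-- If the POVM `(Λ₀, …, Λ_{q−1})` satisfies the Holevo–Yuen–Kennedy–Lax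
conditions for the uniform ensemble `{(1/q, σ_x)}` (i.e. `Y = (1/q)·Σₓ σₓ Λₓ` is Hermitian and
`Y − (1/q)·σ_y ⪰ 0` for all `y`), then the `n`-fold tensor power satisfies them for the product
ensemble: `Y^{⊗n}` is Hermitian and `Y^{⊗n} − q^{−n}·σ^{⊗n}_x ⪰ 0` for every string `x`. -/
theorem stmt9 (d q n : ℕ) (hd : 1 ≤ d) (hq : 1 ≤ q) (hn : 1 ≤ n)
    (σ : Fin q → Matrix (Fin d) (Fin d) ℂ)
    (hσ : ∀ x, (σ x).PosSemidef ∧ (σ x).trace = 1)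
    (Λ : Fin q → Matrix (Fin d) (Fin d) ℂ)
    (hΛ : ∀ x, (Λ x).PosSemidef) (hΛsum : ∑ x, Λ x = 1)
    (Y : Matrix (Fin d) (Fin d) ℂ) (hYdef : Y = (q : ℂ)⁻¹ • ∑ x, σ x * Λ x)
    (hYH : Y.IsHermitian)
    (hYopt : ∀ y : Fin q, (Y - (q : ℂ)⁻¹ • σ y).PosSemidef) :
    (tensorPow n Y).IsHermitian ∧
    ∀ x : Fin n → Fin q,
      (tensorPow n Y - ((q : ℂ) ^ n)⁻¹ • tensorString n σ x).PosSemidef :=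
  stmt9_general d q n σ hσ Y hYH hYopt
end

section
/- (Random coding bound for the q-ary symmetric channel) Let q ≥ 2, n ≥ 1, M ≥ 1, and ε ∈ [0, 1 − 1/q]. Consider the q-ary symmetric channel on alphabet Fin q with per-letter transition probability W(y|x) = 1 − ε if y = x and W(y|x) = ε/(q−1) otherwise, used memorylessly n times. Let the M codewords be drawn independently and uniformly at random from (Fin q)^n, and decode by minimum Hamming distance with ties broken uniformly at random among the closest codewords. Then the expected average success probability equals Σ_{i=0}^{n} C(n,i)·ε^i·(1−ε)^{n−i} · Σ_{l=0}^{M−1} C(M−1,l) · p_i^l · s_i^{M−1−l} / (l+1), where p_i = C(n,i)·(q−1)^i / q^n and s_i = Σ_{j=i+1}^{n} p_j. -/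
open Finset

-- fiber lemma
lemma fiberA {ι A : Type*} [Fintype ι] [DecidableEq ι] [Fintype A] [DecidableEq A]
    (E G : Finset A) (hEG : Disjoint E G) (S : Finset ι) :
    (Finset.univ.filter fun g : ι → A =>
        (∀ j, g j ∈ E ∪ G) ∧ (Finset.univ.filter fun j => g j ∈ E) = S)
      = Fintype.piFinset (fun j => if j ∈ S then E else G) := by
  ext g
  simp only [mem_filter, mem_univ, true_and, Fintype.mem_piFinset, Finset.ext_iff,
    mem_union]
  constructor
  · rintro ⟨h1, h2⟩ j
    by_cases hj : j ∈ S
    · simpa [hj] using (h2 j).2 hj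
    · simp only [hj, if_false]
      have hne : g j ∉ E := fun hE => hj ((h2 j).1 (by simpa using hE))
      rcases h1 j with hE | hG
      · exact absurd hE hne
      · exact hG
  · intro h
    constructor
    · intro j
      by_cases hj : j ∈ S
      · exact Or.inl (by simpa [hj] using h j)
      · exact Or.inr (by simpa [hj] using h j)
    · intro j
      by_cases hj : j ∈ S
      · simp only [mem_univ, true_and, hj, iff_true]
        simpa [hj] using h j
      · simp only [mem_univ, true_and, hj, iff_false]
        intro hE
        exact (Finset.disjoint_left.mp hEG hE) (by simpa [hj] using h j)

lemma keyA {ι A : Type*} [Fintype ι] [DecidableEq ι] [Fintype A] [DecidableEq A]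
    (E G : Finset A) (hEG : Disjoint E G) :
    ∑ g : ι → A, (if ∀ j, g j ∈ E ∪ G then
        (1 + ((Finset.univ.filter fun j => g j ∈ E).card : ℝ))⁻¹ else 0)
      = ∑ l ∈ Finset.range (Fintype.card ι + 1),
        ((Fintype.card ι).choose l : ℝ) * (E.card : ℝ) ^ l *
          (G.card : ℝ) ^ (Fintype.card ι - l) / ((l : ℝ) + 1) := by
  classical
  rw [← Finset.sum_fiberwise_of_maps_to
    (g := fun g : ι → A => Finset.univ.filter fun j => g j ∈ E)
    (t := (Finset.univ : Finset ι).powerset)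
    (fun g _ => Finset.mem_powerset.2 (Finset.filter_subset _ _)) _]
  have step : ∀ S ∈ (Finset.univ : Finset ι).powerset,
      (∑ g ∈ Finset.univ.filter
          (fun g : ι → A => (Finset.univ.filter fun j => g j ∈ E) = S),
        (if ∀ j, g j ∈ E ∪ G then
          (1 + ((Finset.univ.filter fun j => g j ∈ E).card : ℝ))⁻¹ else 0))
      = (E.card : ℝ) ^ S.card * (G.card : ℝ) ^ (Fintype.card ι - S.card) /
          ((S.card : ℝ) + 1) := by
    intro S _
    have : ∀ g ∈ Finset.univ.filter
        (fun g : ι → A => (Finset.univ.filter fun j => g j ∈ E) = S),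
        (if ∀ j, g j ∈ E ∪ G then
          (1 + ((Finset.univ.filter fun j => g j ∈ E).card : ℝ))⁻¹ else 0)
        = (if ∀ j, g j ∈ E ∪ G then (1 + (S.card : ℝ))⁻¹ else 0) := by
      intro g hg
      rw [(Finset.mem_filter.mp hg).2]
    rw [Finset.sum_congr rfl this, Finset.sum_ite, Finset.sum_const_zero, add_zero,
      Finset.sum_const, Finset.filter_filter]
    have hcard : (Finset.univ.filter fun g : ι → A =>
        (Finset.univ.filter fun j => g j ∈ E) = S ∧ ∀ j, g j ∈ E ∪ G).card
        = E.card ^ S.card * G.card ^ (Fintype.card ι - S.card) := by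
      have : (Finset.univ.filter fun g : ι → A =>
          (Finset.univ.filter fun j => g j ∈ E) = S ∧ ∀ j, g j ∈ E ∪ G)
          = Finset.univ.filter fun g : ι → A =>
            (∀ j, g j ∈ E ∪ G) ∧ (Finset.univ.filter fun j => g j ∈ E) = S := by
        apply Finset.filter_congr; intro g _; tauto
      rw [this, fiberA E G hEG S, Fintype.card_piFinset]
      simp only [apply_ite Finset.card]
      rw [Finset.prod_ite, Finset.prod_const, Finset.prod_const, Finset.filter_univ_mem]
      congr 1
      rw [← Finset.compl_filter, Finset.filter_univ_mem, Finset.card_compl]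
    rw [nsmul_eq_mul, hcard]
    push_cast
    rw [add_comm (1:ℝ)]
    field_simp
  rw [Finset.sum_congr rfl step, Finset.sum_powerset_apply_card
    (fun k => (E.card : ℝ) ^ k * (G.card : ℝ) ^ (Fintype.card ι - k) / ((k : ℝ) + 1)),
    Finset.card_univ]
  refine Finset.sum_congr rfl fun l _ => ?_
  rw [nsmul_eq_mul]
  ring

lemma fiberGen {ι A : Type*} [Fintype ι] [DecidableEq ι] [Fintype A] [DecidableEq A]
    (t : ι → Finset A) (S : Finset ι) :
    (Finset.univ.filter fun g : ι → A => (Finset.univ.filter fun j => g j ∈ t j) = S)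
      = Fintype.piFinset (fun j => if j ∈ S then t j else (t j)ᶜ) := by
  ext g
  simp only [mem_filter, mem_univ, true_and, Fintype.mem_piFinset, Finset.ext_iff]
  constructor
  · intro h j
    by_cases hj : j ∈ S
    · simpa [hj] using (h j).2 hj
    · simp only [hj, if_false, Finset.mem_compl]
      exact fun hE => hj ((h j).1 (by simpa using hE))
  · intro h j
    by_cases hj : j ∈ S <;> simp only [mem_univ, true_and, hj, iff_true, iff_false]
    · simpa [hj] using h j
    · have := h j; simp only [hj, if_false, Finset.mem_compl] at this; exact this

lemma ball_card (q n : ℕ) (y : Fin n → Fin q) (d : ℕ) :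
    (Finset.univ.filter fun z : Fin n → Fin q => hammingDist y z = d).card
      = n.choose d * (q - 1) ^ d := by
  classical
  rw [Finset.card_filter]
  rw [← Finset.sum_fiberwise_of_maps_to
    (g := fun z : Fin n → Fin q => Finset.univ.filter fun j => z j ∈ ({y j}ᶜ : Finset (Fin q)))
    (t := (Finset.univ : Finset (Fin n)).powerset)
    (fun z _ => Finset.mem_powerset.2 (Finset.filter_subset _ _)) _]
  have step : ∀ S ∈ (Finset.univ : Finset (Fin n)).powerset,
      (∑ z ∈ Finset.univ.filter (fun z : Fin n → Fin q =>
          (Finset.univ.filter fun j => z j ∈ ({y j}ᶜ : Finset (Fin q))) = S),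
        (if hammingDist y z = d then 1 else 0))
      = if S.card = d then (q - 1) ^ S.card else 0 := by
    intro S _
    have hd : ∀ z ∈ Finset.univ.filter (fun z : Fin n → Fin q =>
        (Finset.univ.filter fun j => z j ∈ ({y j}ᶜ : Finset (Fin q))) = S),
        hammingDist y z = S.card := by
      intro z hz
      rw [← (Finset.mem_filter.mp hz).2]
      unfold hammingDist
      congr 1
      apply Finset.filter_congr
      intro j _
      simp [eq_comm]
    calc (∑ z ∈ Finset.univ.filter (fun z : Fin n → Fin q =>
          (Finset.univ.filter fun j => z j ∈ ({y j}ᶜ : Finset (Fin q))) = S),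
        (if hammingDist y z = d then 1 else 0))
        = ∑ z ∈ Finset.univ.filter (fun z : Fin n → Fin q =>
          (Finset.univ.filter fun j => z j ∈ ({y j}ᶜ : Finset (Fin q))) = S),
        (if S.card = d then 1 else 0) := by
          refine Finset.sum_congr rfl fun z hz => ?_
          rw [hd z hz]
      _ = if S.card = d then (q - 1) ^ S.card else 0 := by
          rw [Finset.sum_const, fiberGen (fun j => ({y j}ᶜ : Finset (Fin q))) S,
            Fintype.card_piFinset]
          have : ∀ j : Fin n, (if j ∈ S then ({y j}ᶜ : Finset (Fin q)) else ({y j}ᶜ)ᶜ).card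
              = if j ∈ S then q - 1 else 1 := by
            intro j
            by_cases hj : j ∈ S <;>
              simp [hj, Finset.card_compl, Fintype.card_fin]
          simp only [this]
          rw [Finset.prod_ite, Finset.prod_const, Finset.prod_const, Finset.filter_univ_mem,
            one_pow, mul_one, smul_eq_mul]
          by_cases hS : S.card = d <;> simp [hS]
  rw [Finset.sum_congr rfl step,
    Finset.sum_powerset_apply_card (fun k => if k = d then (q - 1) ^ k else 0)]
  by_cases hd : d ≤ (Finset.univ : Finset (Fin n)).card
  · rw [Finset.sum_eq_single d]
    · simp
    · intro l _ hl; simp [hl]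
    · intro h; exact absurd (Finset.mem_range.mpr (Nat.lt_succ_of_le hd)) h
  · rw [Finset.card_univ, Fintype.card_fin] at hd ⊢
    rw [Nat.choose_eq_zero_of_lt (lt_of_not_ge hd), zero_mul]
    refine Finset.sum_eq_zero fun l hl => ?_
    have : l ≠ d := by
      intro h; subst h
      exact hd (Nat.lt_succ_iff.mp (by simpa [Fintype.card_fin] using Finset.mem_range.mp hl))
    simp [this]

lemma annulus_card (q n : ℕ) (y : Fin n → Fin q) (d : ℕ) :
    (Finset.univ.filter fun z : Fin n → Fin q => d < hammingDist y z).card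
      = ∑ j ∈ Finset.Icc (d + 1) n, n.choose j * (q - 1) ^ j := by
  classical
  have h1 : (Finset.univ.filter fun z : Fin n → Fin q => d < hammingDist y z)
      = Finset.univ.filter fun z : Fin n → Fin q => hammingDist y z ∈ Finset.Icc (d + 1) n := by
    apply Finset.filter_congr
    intro z _
    simp only [Finset.mem_Icc]
    constructor
    · intro h; exact ⟨h, le_trans hammingDist_le_card_fintype (by simp)⟩
    · intro h; omega
  rw [h1, ← Finset.sum_card_fiberwise_eq_card_filter]
  exact Finset.sum_congr rfl fun j _ => ball_card q n y j

lemma inner_g {q n : ℕ} {ι : Type*} [Fintype ι] [DecidableEq ι] (y : Fin n → Fin q) (d : ℕ) :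
    ∑ g : ι → (Fin n → Fin q),
      (if ∀ j, d ≤ hammingDist y (g j) then
        (1 + ((Finset.univ.filter fun j => hammingDist y (g j) = d).card : ℝ))⁻¹ else 0)
    = ∑ l ∈ Finset.range (Fintype.card ι + 1), ((Fintype.card ι).choose l : ℝ)
        * ((n.choose d * (q - 1) ^ d : ℕ) : ℝ) ^ l
        * ((∑ j ∈ Finset.Icc (d + 1) n, n.choose j * (q - 1) ^ j : ℕ) : ℝ)
            ^ (Fintype.card ι - l) / ((l : ℝ) + 1) := by
  classical
  set E : Finset (Fin n → Fin q) := Finset.univ.filter fun z => hammingDist y z = d with hE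
  set G : Finset (Fin n → Fin q) := Finset.univ.filter fun z => d < hammingDist y z with hG
  have hEG : Disjoint E G := by
    rw [Finset.disjoint_left]
    intro z hzE hzG
    rw [hE, Finset.mem_filter] at hzE
    rw [hG, Finset.mem_filter] at hzG
    omega
  have hsum := keyA (ι := ι) E G hEG
  have hmemE : ∀ z, z ∈ E ↔ hammingDist y z = d := by intro z; simp [hE]
  have hmemEG : ∀ z, z ∈ E ∪ G ↔ d ≤ hammingDist y z := by
    intro z; simp only [Finset.mem_union, hE, hG, Finset.mem_filter, Finset.mem_univ, true_and]
    omega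
  have hcongr : ∀ g : ι → (Fin n → Fin q),
      (if ∀ j, d ≤ hammingDist y (g j) then
        (1 + ((Finset.univ.filter fun j => hammingDist y (g j) = d).card : ℝ))⁻¹ else 0)
      = (if ∀ j, g j ∈ E ∪ G then
        (1 + ((Finset.univ.filter fun j => g j ∈ E).card : ℝ))⁻¹ else 0) := by
    intro g
    have h1 : (∀ j, d ≤ hammingDist y (g j)) ↔ (∀ j, g j ∈ E ∪ G) := by
      constructor <;> intro h j <;> [exact (hmemEG _).mpr (h j); exact (hmemEG _).mp (h j)]
    have h2 : (Finset.univ.filter fun j => hammingDist y (g j) = d)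
        = (Finset.univ.filter fun j => g j ∈ E) := by
      apply Finset.filter_congr; intro j _; simp [hmemE]
    rw [h2]
    exact if_congr h1 rfl rfl
  rw [Finset.sum_congr rfl (fun g _ => hcongr g), hsum]
  have hEcard : E.card = n.choose d * (q - 1) ^ d := ball_card q n y d
  have hGcard : G.card = ∑ j ∈ Finset.Icc (d + 1) n, n.choose j * (q - 1) ^ j :=
    annulus_card q n y d
  rw [hEcard, hGcard]

lemma sum_over_y {q n : ℕ} (x : Fin n → Fin q) (Ψ : ℕ → ℝ) :
    ∑ y : Fin n → Fin q, Ψ (hammingDist y x)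
      = ∑ i ∈ Finset.range (n + 1), ((n.choose i * (q - 1) ^ i : ℕ) : ℝ) * Ψ i := by
  classical
  rw [← Finset.sum_fiberwise_of_maps_to
    (g := fun y : Fin n → Fin q => hammingDist y x)
    (t := Finset.range (n + 1))
    (fun y _ => Finset.mem_range.mpr
      (Nat.lt_succ_of_le (le_trans hammingDist_le_card_fintype (by simp)))) _]
  refine Finset.sum_congr rfl fun i _ => ?_
  have h1 : ∀ y ∈ Finset.univ.filter (fun y : Fin n → Fin q => hammingDist y x = i),
      Ψ (hammingDist y x) = Ψ i := fun y hy => by rw [(Finset.mem_filter.mp hy).2]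
  rw [Finset.sum_congr rfl h1, Finset.sum_const, nsmul_eq_mul]
  congr 1
  have h2 : (Finset.univ.filter fun y : Fin n → Fin q => hammingDist y x = i)
      = Finset.univ.filter fun y : Fin n → Fin q => hammingDist x y = i := by
    apply Finset.filter_congr; intro y _; rw [hammingDist_comm]
  rw [h2, ball_card q n x i]

lemma card_ne_fin {M : ℕ} (m : Fin M) : Fintype.card {j : Fin M // j ≠ m} = M - 1 := by
  rw [Fintype.card_subtype]
  rw [Finset.filter_ne']
  rw [Finset.card_erase_of_mem (Finset.mem_univ m), Finset.card_univ, Fintype.card_fin]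

lemma filter_card_split {M : ℕ} (m : Fin M) (P : Fin M → Prop) [DecidablePred P] (hm : P m) :
    ((Finset.univ.filter fun m' => P m').card : ℝ)
      = 1 + ((Finset.univ.filter fun j : {j : Fin M // j ≠ m} => P j.1).card : ℝ) := by
  have h1 : (Finset.univ : Finset (Fin M)) = insert m (Finset.univ.erase m) :=
    (Finset.insert_erase (Finset.mem_univ m)).symm
  rw [h1, Finset.filter_insert, if_pos hm,
    Finset.card_insert_of_notMem (fun h => (Finset.mem_erase.mp (Finset.mem_of_mem_filter _ h)).1 rfl)]
  have h2 : ((Finset.univ.erase m).filter P).card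
      = (Finset.univ.filter fun j : {j : Fin M // j ≠ m} => P j.1).card := by
    apply Finset.card_bij (fun (j : Fin M) (hj : j ∈ (Finset.univ.erase m).filter P) =>
      (⟨j, (Finset.mem_erase.mp (Finset.mem_of_mem_filter _ hj)).1⟩ : {j : Fin M // j ≠ m}))
    · intro a ha
      simp only [Finset.mem_filter, Finset.mem_univ, true_and]
      exact (Finset.mem_filter.mp ha).2
    · intro a ha b hb hab
      simpa [Subtype.mk.injEq] using hab
    · intro b hb
      refine ⟨b.1, Finset.mem_filter.mpr ⟨Finset.mem_erase.mpr ⟨b.2, Finset.mem_univ _⟩,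
        (Finset.mem_filter.mp hb).2⟩, rfl⟩
  rw [h2]
  push_cast
  ring



/-- random coding bound for the q-ary symmetric channel: with `M` codewords
drawn independently and uniformly from `(Fin q)ⁿ` and minimum-Hamming-distance decoding with
uniform tie-breaking over the memoryless `q`-ary symmetric channel with total error
probability `ε ≤ 1 − 1/q` (per-letter transition probability `ε/(q−1)` to each wrong symbol),
the expected average success probability equals
`Σᵢ C(n,i) εⁱ (1−ε)^{n−i} Σ_l C(M−1,l) pᵢˡ sᵢ^{M−1−l}/(l+1)`, where
`pᵢ = C(n,i)(q−1)ⁱ/qⁿ` and `sᵢ = Σ_{j>i} pⱼ`. The expectation over the codebook is written as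
the average over all codebooks `C : Fin M → (Fin n → Fin q)`, and the uniform tie-break as the
factor `1/#closest` when the sent codeword is among the closest ones. -/
theorem stmt14 (q n M : ℕ) (hq : 2 ≤ q) (hn : 1 ≤ n) (hM : 1 ≤ M)
    (ε : ℝ) (hε0 : 0 ≤ ε) (hε1 : ε ≤ 1 - 1 / q)
    (p s : ℕ → ℝ)
    (hp : ∀ i, p i = (n.choose i : ℝ) * ((q : ℝ) - 1) ^ i / (q : ℝ) ^ n)
    (hs : ∀ i, s i = ∑ j ∈ Finset.Icc (i + 1) n, p j) :
    (((q : ℝ) ^ n) ^ M)⁻¹ *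
      ∑ C : Fin M → (Fin n → Fin q),
        (M : ℝ)⁻¹ * ∑ m, ∑ y : Fin n → Fin q,
          (ε / ((q : ℝ) - 1)) ^ hammingDist y (C m) * (1 - ε) ^ (n - hammingDist y (C m)) *
          (if ∀ m', hammingDist y (C m) ≤ hammingDist y (C m') then
            ((Finset.univ.filter fun m' => hammingDist y (C m') = hammingDist y (C m)).card : ℝ)⁻¹
          else 0)
      = ∑ i ∈ Finset.range (n + 1), (n.choose i : ℝ) * ε ^ i * (1 - ε) ^ (n - i) *
          ∑ l ∈ Finset.range M,
            ((M - 1).choose l : ℝ) * p i ^ l * s i ^ (M - 1 - l) / ((l : ℝ) + 1) := by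
  have hq0' : 0 < q := by omega
  have hq0 : (0:ℝ) < (q:ℝ) := by exact_mod_cast hq0'
  have hq1 : ((q : ℝ) - 1) ≠ 0 := by
    have : (2:ℝ) ≤ (q:ℝ) := by exact_mod_cast hq
    linarith
  have hqn : ((q : ℝ) ^ n) ≠ 0 := by positivity
  have hM0 : (M : ℝ) ≠ 0 := by
    have : (1:ℝ) ≤ (M:ℝ) := by exact_mod_cast hM
    linarith
  -- abbreviations
  set Ec : ℕ → ℕ := fun i => n.choose i * (q - 1) ^ i with hEc
  set Gc : ℕ → ℕ := fun i => ∑ j ∈ Finset.Icc (i + 1) n, n.choose j * (q - 1) ^ j with hGc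
  set F : ℕ → ℝ := fun i => ∑ l ∈ Finset.range ((M - 1) + 1),
      ((M - 1).choose l : ℝ) * ((Ec i : ℕ) : ℝ) ^ l * ((Gc i : ℕ) : ℝ) ^ (M - 1 - l)
        / ((l : ℝ) + 1) with hF
  set Ψ : ℕ → ℝ := fun i => (ε / ((q:ℝ) - 1)) ^ i * (1 - ε) ^ (n - i) * F i with hΨ
  -- Step: per-m evaluation
  have step_m : ∀ m : Fin M,
      (∑ C : Fin M → (Fin n → Fin q), ∑ y : Fin n → Fin q,
        (ε / ((q : ℝ) - 1)) ^ hammingDist y (C m) * (1 - ε) ^ (n - hammingDist y (C m)) *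
        (if ∀ m', hammingDist y (C m) ≤ hammingDist y (C m') then
          ((Finset.univ.filter fun m' =>
            hammingDist y (C m') = hammingDist y (C m)).card : ℝ)⁻¹
        else 0))
      = (q:ℝ) ^ n * ∑ i ∈ Finset.range (n + 1), ((Ec i : ℕ) : ℝ) * Ψ i := by
    intro m
    rw [← Equiv.sum_comp (Equiv.funSplitAt m (Fin n → Fin q)).symm, Fintype.sum_prod_type]
    have hpoint : ∀ (x : Fin n → Fin q) (g : {j : Fin M // j ≠ m} → (Fin n → Fin q))
        (y : Fin n → Fin q),
        ((ε / ((q : ℝ) - 1)) ^ hammingDist y (((Equiv.funSplitAt m (Fin n → Fin q)).symm (x, g)) m)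
          * (1 - ε) ^ (n - hammingDist y (((Equiv.funSplitAt m (Fin n → Fin q)).symm (x, g)) m)) *
          (if ∀ m', hammingDist y (((Equiv.funSplitAt m (Fin n → Fin q)).symm (x, g)) m)
              ≤ hammingDist y (((Equiv.funSplitAt m (Fin n → Fin q)).symm (x, g)) m') then
            ((Finset.univ.filter fun m' =>
              hammingDist y (((Equiv.funSplitAt m (Fin n → Fin q)).symm (x, g)) m')
                = hammingDist y (((Equiv.funSplitAt m (Fin n → Fin q)).symm (x, g)) m)).card : ℝ)⁻¹
          else 0))
        = (ε / ((q : ℝ) - 1)) ^ hammingDist y x * (1 - ε) ^ (n - hammingDist y x) *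
          (if ∀ j : {j : Fin M // j ≠ m}, hammingDist y x ≤ hammingDist y (g j) then
            (1 + ((Finset.univ.filter fun j : {j : Fin M // j ≠ m} =>
              hammingDist y (g j) = hammingDist y x).card : ℝ))⁻¹
          else 0) := by
      intro x g y
      have hm : ((Equiv.funSplitAt m (Fin n → Fin q)).symm (x, g)) m = x := by
        simp [Equiv.funSplitAt, Equiv.piSplitAt]
      have hj : ∀ j : {j : Fin M // j ≠ m},
          ((Equiv.funSplitAt m (Fin n → Fin q)).symm (x, g)) j.1 = g j := fun j => by
        simp [Equiv.funSplitAt, Equiv.piSplitAt, j.2]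
      have hcond : (∀ m', hammingDist y x
            ≤ hammingDist y (((Equiv.funSplitAt m (Fin n → Fin q)).symm (x, g)) m'))
          ↔ ∀ j : {j : Fin M // j ≠ m}, hammingDist y x ≤ hammingDist y (g j) := by
        constructor
        · intro h j; have := h j.1; rwa [hj j] at this
        · intro h m'
          by_cases hmm : m' = m
          · subst hmm; rw [hm]
          · have h2 : (Equiv.funSplitAt m (Fin n → Fin q)).symm (x, g) m' = g ⟨m', hmm⟩ :=
              hj ⟨m', hmm⟩
            rw [h2]; exact h ⟨m', hmm⟩
      have hcard : (((Finset.univ.filter fun m' =>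
            hammingDist y (((Equiv.funSplitAt m (Fin n → Fin q)).symm (x, g)) m')
              = hammingDist y x).card : ℕ) : ℝ)
          = 1 + ((Finset.univ.filter fun j : {j : Fin M // j ≠ m} =>
              hammingDist y (g j) = hammingDist y x).card : ℝ) := by
        rw [filter_card_split m (fun m' =>
          hammingDist y (((Equiv.funSplitAt m (Fin n → Fin q)).symm (x, g)) m')
            = hammingDist y x) (by simp [hm])]
        have hfe : (Finset.univ.filter fun j : {j : Fin M // j ≠ m} =>
              hammingDist y (((Equiv.funSplitAt m (Fin n → Fin q)).symm (x, g)) j.1)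
                = hammingDist y x)
            = Finset.univ.filter fun j : {j : Fin M // j ≠ m} =>
              hammingDist y (g j) = hammingDist y x :=
          Finset.filter_congr fun j _ => by rw [hj j]
        rw [hfe]
      simp only [hm]
      rw [hcard]
      congr 1
      exact if_congr hcond rfl rfl
    calc ∑ x : Fin n → Fin q, ∑ g : {j : Fin M // j ≠ m} → (Fin n → Fin q),
          ∑ y : Fin n → Fin q,
          ((ε / ((q : ℝ) - 1)) ^ hammingDist y (((Equiv.funSplitAt m (Fin n → Fin q)).symm (x, g)) m)
            * (1 - ε) ^ (n - hammingDist y (((Equiv.funSplitAt m (Fin n → Fin q)).symm (x, g)) m)) *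
            (if ∀ m', hammingDist y (((Equiv.funSplitAt m (Fin n → Fin q)).symm (x, g)) m)
                ≤ hammingDist y (((Equiv.funSplitAt m (Fin n → Fin q)).symm (x, g)) m') then
              ((Finset.univ.filter fun m' =>
                hammingDist y (((Equiv.funSplitAt m (Fin n → Fin q)).symm (x, g)) m')
                  = hammingDist y (((Equiv.funSplitAt m (Fin n → Fin q)).symm (x, g)) m)).card : ℝ)⁻¹
            else 0))
        = ∑ x : Fin n → Fin q, ∑ y : Fin n → Fin q, Ψ (hammingDist y x) := by
          refine Finset.sum_congr rfl fun x _ => ?_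
          rw [Finset.sum_comm]
          refine Finset.sum_congr rfl fun y _ => ?_
          rw [Finset.sum_congr rfl fun g _ => hpoint x g y]
          rw [← Finset.mul_sum, inner_g y (hammingDist y x), card_ne_fin m]
      _ = ∑ x : Fin n → Fin q, ∑ i ∈ Finset.range (n + 1), ((Ec i : ℕ) : ℝ) * Ψ i := by
          refine Finset.sum_congr rfl fun x _ => ?_
          exact sum_over_y x Ψ
      _ = (q:ℝ) ^ n * ∑ i ∈ Finset.range (n + 1), ((Ec i : ℕ) : ℝ) * Ψ i := by
          rw [Finset.sum_const, nsmul_eq_mul, Finset.card_univ]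
          congr 1
          rw [Fintype.card_fun]
          push_cast [Fintype.card_fin]
          ring
  -- assemble
  calc (((q : ℝ) ^ n) ^ M)⁻¹ *
      ∑ C : Fin M → (Fin n → Fin q),
        (M : ℝ)⁻¹ * ∑ m, ∑ y : Fin n → Fin q,
          (ε / ((q : ℝ) - 1)) ^ hammingDist y (C m) * (1 - ε) ^ (n - hammingDist y (C m)) *
          (if ∀ m', hammingDist y (C m) ≤ hammingDist y (C m') then
            ((Finset.univ.filter fun m' =>
              hammingDist y (C m') = hammingDist y (C m)).card : ℝ)⁻¹
          else 0)
      = (((q : ℝ) ^ n) ^ M)⁻¹ * ((M : ℝ)⁻¹ *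
          ∑ m : Fin M, ∑ C : Fin M → (Fin n → Fin q), ∑ y : Fin n → Fin q,
          (ε / ((q : ℝ) - 1)) ^ hammingDist y (C m) * (1 - ε) ^ (n - hammingDist y (C m)) *
          (if ∀ m', hammingDist y (C m) ≤ hammingDist y (C m') then
            ((Finset.univ.filter fun m' =>
              hammingDist y (C m') = hammingDist y (C m)).card : ℝ)⁻¹
          else 0)) := by
        rw [← Finset.mul_sum, Finset.sum_comm]
    _ = (((q : ℝ) ^ n) ^ M)⁻¹ * ((M : ℝ)⁻¹ * ((M : ℝ) * ((q:ℝ) ^ n *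
          ∑ i ∈ Finset.range (n + 1), ((Ec i : ℕ) : ℝ) * Ψ i))) := by
        rw [Finset.sum_congr rfl (fun m _ => step_m m), Finset.sum_const, Finset.card_univ,
          Fintype.card_fin, nsmul_eq_mul]
    _ = ∑ i ∈ Finset.range (n + 1), (n.choose i : ℝ) * ε ^ i * (1 - ε) ^ (n - i) *
          ∑ l ∈ Finset.range M,
            ((M - 1).choose l : ℝ) * p i ^ l * s i ^ (M - 1 - l) / ((l : ℝ) + 1) := by
        rw [← mul_assoc ((M:ℝ)⁻¹), inv_mul_cancel₀ hM0, one_mul, ← mul_assoc,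
          Finset.mul_sum]
        refine Finset.sum_congr rfl fun i _ => ?_
        have hq1n : (1:ℕ) ≤ q := by omega
        have hEcast : ((Ec i : ℕ) : ℝ) = (n.choose i : ℝ) * ((q:ℝ) - 1) ^ i := by
          rw [hEc]; push_cast [Nat.cast_sub hq1n]; ring
        have hpi : p i = ((Ec i : ℕ) : ℝ) / (q:ℝ) ^ n := by rw [hp i, hEcast]
        have hsi : s i = ((Gc i : ℕ) : ℝ) / (q:ℝ) ^ n := by
          rw [hs i, Finset.sum_congr rfl (fun j _ => hp j), ← Finset.sum_div]
          congr 1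
          rw [hGc]
          push_cast [Nat.cast_sub hq1n]
          rfl
        simp only [hΨ, hF]
        rw [Nat.sub_add_cancel hM]
        simp only [Finset.mul_sum]
        refine Finset.sum_congr rfl fun l hl => ?_
        have hlM : l ≤ M - 1 := by
          have := Finset.mem_range.mp hl; omega
        obtain ⟨M', rfl⟩ : ∃ M', M = M' + 1 := ⟨M - 1, by omega⟩
        simp only [Nat.add_sub_cancel] at *
        rw [hpi, hsi, hEcast, div_pow, div_pow]
        have hpowM : (((q:ℝ) ^ n) ^ (M' + 1)) = ((q:ℝ)^n) ^ l * ((q:ℝ)^n) ^ (M' - l) * (q:ℝ)^n := by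
          rw [← pow_add, ← pow_succ]
          congr 1
          omega
        rw [hpowM, div_pow]
        have h1 : ((q:ℝ)^n) ^ l ≠ 0 := by positivity
        have h2 : ((q:ℝ)^n) ^ (M' - l) ≠ 0 := by positivity
        have h3 : ((l:ℝ) + 1) ≠ 0 := by positivity
        have h4 : ((q:ℝ) - 1) ^ i ≠ 0 := pow_ne_zero _ hq1
        field_simp
end

section
/- (Random coding bound for additive-noise channels) Let q ≥ 2, n ≥ 1, M ≥ 1, and let P be a probability distribution on (ZMod q)^n. Consider the additive-noise channel whose output is y = x + e (componentwise addition in ZMod q), with noise e drawn according to P. For each noise vector e, let n_e = #{e' ∈ (ZMod q)^n : P(e') = P(e)} and S_e = #{e' ∈ (ZMod q)^n : P(e') < P(e)}. Let the M codewords be drawn independently and uniformly at random from (ZMod q)^n, and decode a received y by maximum likelihood (choosing m maximizing P(y − x_m)), with ties broken uniformly at random. Then the expected average success probability equals Σ_e P(e) · Σ_{l=0}^{M−1} C(M−1,l) · (n_e/q^n)^l · (S_e/q^n)^{M−1−l} / (l+1). -/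
open scoped Classical
open Finset


lemma key_count {ι V : Type*} [Fintype ι] [DecidableEq ι] [Fintype V] [DecidableEq V]
    (m : ι) (f : V → ℝ) (t : ℝ) :
    ∑ g : ι → V,
      (if ∀ i, i ≠ m → f (g i) ≤ t then
        (1 + ((Finset.univ.filter fun i => i ≠ m ∧ f (g i) = t).card : ℝ))⁻¹ else 0)
    = (Fintype.card V : ℝ) *
      ∑ l ∈ Finset.range (Fintype.card ι - 1 + 1),
        ((Fintype.card ι - 1).choose l : ℝ) *
          ((Finset.univ.filter fun v => f v = t).card : ℝ) ^ l *
          ((Finset.univ.filter fun v => f v < t).card : ℝ) ^ (Fintype.card ι - 1 - l) /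
          ((l : ℝ) + 1) := by
  set A := Finset.univ.filter fun v => f v = t with hA
  set B := Finset.univ.filter fun v => f v < t with hB
  have hAB : Disjoint A B := by
    rw [Finset.disjoint_left]
    rintro v hvA hvB
    rw [hA, mem_filter] at hvA
    rw [hB, mem_filter] at hvB
    exact absurd hvA.2 (ne_of_lt hvB.2)
  have hcond : (Finset.univ.filter fun g : ι → V => ∀ i, i ≠ m → f (g i) ≤ t)
      = Fintype.piFinset (fun i => if i = m then (Finset.univ : Finset V) else A ∪ B) := by
    ext g
    simp only [mem_filter, Fintype.mem_piFinset, mem_univ, true_and]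
    constructor
    · intro h i
      by_cases hi : i = m
      · simp [hi]
      · rw [if_neg hi]
        simp only [hA, hB, mem_union, mem_filter, mem_univ, true_and]
        rcases lt_or_eq_of_le (h i hi) with h' | h'
        · exact Or.inr h'
        · exact Or.inl h'
    · intro h i hi
      have hh := h i
      rw [if_neg hi] at hh
      simp only [hA, hB, mem_union, mem_filter, mem_univ, true_and] at hh
      rcases hh with h' | h'
      · exact le_of_eq h'
      · exact le_of_lt h'
  rw [← Finset.sum_filter, hcond]
  rw [← Finset.sum_fiberwise_of_maps_to
    (t := ({m}ᶜ : Finset ι).powerset)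
    (g := fun g : ι → V => Finset.univ.filter fun i => i ≠ m ∧ g i ∈ A)
    (fun g _ => by
      rw [mem_powerset]
      intro i hi
      rw [mem_filter] at hi
      simpa using hi.2.1)]
  have hfiber : ∀ s ∈ ({m}ᶜ : Finset ι).powerset,
      (Fintype.piFinset (fun i => if i = m then (Finset.univ : Finset V) else A ∪ B)).filter
        (fun g => (Finset.univ.filter fun i => i ≠ m ∧ g i ∈ A) = s)
      = Fintype.piFinset (fun i => if i = m then (Finset.univ : Finset V)
          else if i ∈ s then A else B) := by
    intro s hs
    rw [mem_powerset] at hs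
    have hms : m ∉ s := fun h => by simpa using hs h
    ext g
    simp only [mem_filter, Fintype.mem_piFinset]
    constructor
    · rintro ⟨h1, h2⟩ i
      by_cases hi : i = m
      · simp [hi]
      · rw [if_neg hi]
        by_cases his : i ∈ s
        · rw [if_pos his]
          rw [← h2, mem_filter] at his
          exact his.2.2
        · rw [if_neg his]
          have hA' : g i ∉ A := by
            intro hgA
            exact his (h2 ▸ (mem_filter.2 ⟨mem_univ i, hi, hgA⟩))
          have := h1 i
          rw [if_neg hi, mem_union] at this
          exact this.resolve_left hA'
    · intro h
      constructor
      · intro i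
        have hh := h i
        by_cases hi : i = m
        · simpa [hi] using hh
        · rw [if_neg hi] at hh ⊢
          by_cases his : i ∈ s
          · rw [if_pos his] at hh; exact mem_union_left _ hh
          · rw [if_neg his] at hh; exact mem_union_right _ hh
      · ext i
        simp only [mem_filter, mem_univ, true_and]
        constructor
        · rintro ⟨hi, hgA⟩
          by_contra his
          have hh := h i
          rw [if_neg hi, if_neg his] at hh
          exact (Finset.disjoint_left.1 hAB hgA) hh
        · intro his
          have hi : i ≠ m := fun h' => hms (h' ▸ his)
          have hh := h i
          rw [if_neg hi, if_pos his] at hh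
          exact ⟨hi, hh⟩
  calc ∑ s ∈ ({m}ᶜ : Finset ι).powerset,
        ∑ g ∈ (Fintype.piFinset (fun i => if i = m then (Finset.univ : Finset V) else A ∪ B)).filter
          (fun g => (Finset.univ.filter fun i => i ≠ m ∧ g i ∈ A) = s),
          (1 + ((Finset.univ.filter fun i => i ≠ m ∧ f (g i) = t).card : ℝ))⁻¹
      = ∑ s ∈ ({m}ᶜ : Finset ι).powerset,
          ((Fintype.card V : ℝ) * (A.card : ℝ) ^ s.card * (B.card : ℝ) ^ (Fintype.card ι - 1 - s.card))
            * (1 + (s.card : ℝ))⁻¹ := by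
        refine Finset.sum_congr rfl fun s hs => ?_
        have hconst : ∀ g ∈ (Fintype.piFinset (fun i => if i = m then (Finset.univ : Finset V) else A ∪ B)).filter
            (fun g => (Finset.univ.filter fun i => i ≠ m ∧ g i ∈ A) = s),
            (1 + ((Finset.univ.filter fun i => i ≠ m ∧ f (g i) = t).card : ℝ))⁻¹
              = (1 + (s.card : ℝ))⁻¹ := by
          intro g hg
          rw [mem_filter] at hg
          have : (Finset.univ.filter fun i => i ≠ m ∧ f (g i) = t)
              = (Finset.univ.filter fun i => i ≠ m ∧ g i ∈ A) := by
            refine Finset.filter_congr fun i _ => ?_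
            simp [hA]
          rw [this, hg.2]
        rw [Finset.sum_congr rfl hconst, Finset.sum_const, hfiber s hs, Fintype.card_piFinset,
          nsmul_eq_mul]
        congr 1
        rw [mem_powerset] at hs
        have hms : m ∉ s := fun h => by simpa using hs h
        have hsub : s ⊆ Finset.univ.erase m := by
          intro i hi
          exact Finset.mem_erase.2 ⟨fun h => hms (h ▸ hi), mem_univ i⟩
        rw [← Finset.mul_prod_erase Finset.univ _ (mem_univ m)]
        rw [if_pos rfl, Finset.card_univ]
        have hrest : ∏ i ∈ Finset.univ.erase m,
            ((if i = m then (Finset.univ : Finset V) else if i ∈ s then A else B).card)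
            = A.card ^ s.card * B.card ^ (Fintype.card ι - 1 - s.card) := by
          rw [Finset.prod_congr rfl (fun i hi => by
            rw [if_neg (Finset.mem_erase.1 hi).1])]
          rw [← Finset.union_sdiff_of_subset hsub, Finset.prod_union Finset.disjoint_sdiff]
          rw [Finset.prod_congr rfl (fun i hi => by rw [if_pos hi]),
            Finset.prod_congr rfl (fun i (hi : i ∈ _ \ s) => by rw [if_neg (Finset.mem_sdiff.1 hi).2]),
            Finset.prod_const, Finset.prod_const, Finset.card_sdiff_of_subset hsub,
            Finset.card_erase_of_mem (mem_univ m), Finset.card_univ]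
        rw [hrest]
        push_cast
        ring
    _ = (Fintype.card V : ℝ) *
        ∑ l ∈ Finset.range (Fintype.card ι - 1 + 1),
          ((Fintype.card ι - 1).choose l : ℝ) * (A.card : ℝ) ^ l *
            (B.card : ℝ) ^ (Fintype.card ι - 1 - l) / ((l : ℝ) + 1) := by
        have hcard : ({m}ᶜ : Finset ι).card = Fintype.card ι - 1 := by
          rw [Finset.card_compl, Finset.card_singleton]
        rw [Finset.sum_powerset]
        rw [hcard, Finset.mul_sum]
        refine Finset.sum_congr rfl fun l hl => ?_
        rw [Finset.sum_congr rfl (fun s hs => by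
          rw [(Finset.mem_powersetCard.1 hs).2]), Finset.sum_const,
          Finset.card_powersetCard, hcard, nsmul_eq_mul]
        push_cast
        ring



lemma my_inner_sum (q n M : ℕ) [NeZero q] (P : (Fin n → ZMod q) → ℝ) (m : Fin M)
    (e : Fin n → ZMod q)
    :
    ∑ C : Fin M → (Fin n → ZMod q),
      (if ∀ m', P (C m + e - C m') ≤ P e then
        ((Finset.univ.filter fun m' => P (C m + e - C m') = P e).card : ℝ)⁻¹ else 0)
    = ((q : ℝ) ^ n) *
      ∑ l ∈ Finset.range (M - 1 + 1),
        ((M - 1).choose l : ℝ) *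
          ((Finset.univ.filter fun e' => P e' = P e).card : ℝ) ^ l *
          ((Finset.univ.filter fun e' => P e' < P e).card : ℝ) ^ (M - 1 - l) /
          ((l : ℝ) + 1) := by
  set G : (Fin M → (Fin n → ZMod q)) → ℝ := fun g =>
    if ∀ m', m' ≠ m → P (g m') ≤ P e then
      (1 + ((Finset.univ.filter fun m' => m' ≠ m ∧ P (g m') = P e).card : ℝ))⁻¹ else 0
    with hG
  set φ : (Fin M → (Fin n → ZMod q)) → (Fin M → (Fin n → ZMod q)) := fun C m' =>
    if m' = m then C m else C m + e - C m' with hφ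
  have hinv : Function.Involutive φ := by
    intro C
    funext m'
    by_cases h : m' = m
    · simp [hφ, h]
    · simp only [hφ, if_neg h, if_pos rfl, if_true, eq_self_iff_true]
      rw [sub_sub_cancel]
  have hstep : ∀ C : Fin M → (Fin n → ZMod q),
      (if ∀ m', P (C m + e - C m') ≤ P e then
        ((Finset.univ.filter fun m' => P (C m + e - C m') = P e).card : ℝ)⁻¹ else 0)
      = G (φ C) := by
    intro C
    have hme : C m + e - C m = e := add_sub_cancel_left (C m) e
    have hiff : (∀ m', P (C m + e - C m') ≤ P e) ↔
        (∀ m', m' ≠ m → P (φ C m') ≤ P e) := by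
      constructor
      · intro h m' hm'
        simpa [hφ, if_neg hm'] using h m'
      · intro h m'
        by_cases hm' : m' = m
        · rw [hm', hme]
        · simpa [hφ, if_neg hm'] using h m' hm'
    simp only [hG]
    by_cases h : ∀ m', P (C m + e - C m') ≤ P e
    · rw [if_pos h, if_pos (hiff.1 h)]
      congr 1
      have hset : (Finset.univ.filter fun m' => P (C m + e - C m') = P e)
          = insert m (Finset.univ.filter fun m' => m' ≠ m ∧ P (φ C m') = P e) := by
        ext m'
        simp only [mem_filter, mem_univ, true_and, mem_insert]
        by_cases hm' : m' = m
        · subst hm'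
          simp [hme]
        · simp only [hm', false_or, hφ, if_neg hm']
          tauto
      rw [hset, Finset.card_insert_of_notMem (by simp)]
      push_cast
      ring
    · rw [if_neg h, if_neg (fun h' => h (hiff.2 h'))]
  rw [Finset.sum_congr rfl fun C _ => hstep C]
  have hbij : ∑ C : Fin M → (Fin n → ZMod q), G (φ C) = ∑ g, G g :=
    Equiv.sum_comp hinv.toPerm G
  rw [hbij]
  simp only [hG]
  have h := key_count (ι := Fin M) m P (P e)
  rw [Fintype.card_fun, ZMod.card, Fintype.card_fin, Fintype.card_fin] at h
  push_cast at h
  refine Eq.trans ?_ h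
  refine Finset.sum_congr rfl fun g _ => ?_
  congr 1

/-- random coding bound for additive-noise channels: over the additive-noise
channel `y = x + e` on `(ZMod q)ⁿ` with noise distribution `P`, with `M` codewords drawn
independently and uniformly at random and maximum-likelihood decoding with uniform
tie-breaking, the expected average success probability equals
`Σ_e P(e) Σ_l C(M−1,l) (n_e/qⁿ)ˡ (S_e/qⁿ)^{M−1−l}/(l+1)`, where
`n_e = #{e' : P(e') = P(e)}` and `S_e = #{e' : P(e') < P(e)}`. The expectation over the
codebook is written as the average over all codebooks `C : Fin M → (Fin n → ZMod q)`, and the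
uniform tie-break as the factor `1/#maximizers` when the sent codeword is a likelihood
maximizer. -/
theorem stmt15 (q n M : ℕ) [NeZero q] (hq : 2 ≤ q) (hn : 1 ≤ n) (hM : 1 ≤ M)
    (P : (Fin n → ZMod q) → ℝ) (hP0 : ∀ e, 0 ≤ P e) (hP1 : ∑ e, P e = 1) :
    (((q : ℝ) ^ n) ^ M)⁻¹ *
      ∑ C : Fin M → (Fin n → ZMod q),
        (M : ℝ)⁻¹ * ∑ m, ∑ e : Fin n → ZMod q,
          P e *
          (if ∀ m', P (C m + e - C m') ≤ P e then
            ((Finset.univ.filter fun m' => P (C m + e - C m') = P e).card : ℝ)⁻¹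
          else 0)
      = ∑ e : Fin n → ZMod q, P e *
          ∑ l ∈ Finset.range M,
            ((M - 1).choose l : ℝ) *
            (((Finset.univ.filter fun e' => P e' = P e).card : ℝ) / (q : ℝ) ^ n) ^ l *
            (((Finset.univ.filter fun e' => P e' < P e).card : ℝ) / (q : ℝ) ^ n) ^ (M - 1 - l) /
            ((l : ℝ) + 1) := by
  have hq0 : (0:ℝ) < (q:ℝ) ^ n := by positivity
  have hN : ((q:ℝ) ^ n) ≠ 0 := ne_of_gt hq0
  have hM0 : (M:ℝ) ≠ 0 := Nat.cast_ne_zero.2 (by omega)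
  have hswap : (∑ C : Fin M → (Fin n → ZMod q),
        (M : ℝ)⁻¹ * ∑ m, ∑ e : Fin n → ZMod q,
          P e *
          (if ∀ m', P (C m + e - C m') ≤ P e then
            ((Finset.univ.filter fun m' => P (C m + e - C m') = P e).card : ℝ)⁻¹
          else 0))
      = (M : ℝ)⁻¹ * ∑ m : Fin M, ∑ e : Fin n → ZMod q,
          P e * ∑ C : Fin M → (Fin n → ZMod q),
          (if ∀ m', P (C m + e - C m') ≤ P e then
            ((Finset.univ.filter fun m' => P (C m + e - C m') = P e).card : ℝ)⁻¹
          else 0) := by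
    rw [← Finset.mul_sum]
    congr 1
    rw [Finset.sum_comm]
    refine Finset.sum_congr rfl fun m _ => ?_
    rw [Finset.sum_comm]
    refine Finset.sum_congr rfl fun e _ => ?_
    rw [← Finset.mul_sum]
  rw [hswap]
  rw [Finset.sum_congr rfl (fun m (_ : m ∈ Finset.univ) => Finset.sum_congr rfl
    (fun e (_ : e ∈ Finset.univ) => by
      rw [my_inner_sum q n M P m e, Nat.sub_add_cancel hM]))]
  rw [Finset.sum_const, Finset.card_univ, Fintype.card_fin, nsmul_eq_mul,
    inv_mul_cancel_left₀ hM0, Finset.mul_sum]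
  refine Finset.sum_congr rfl fun e _ => ?_
  have hsum : (∑ l ∈ Finset.range M,
        ((M - 1).choose l : ℝ) *
          (((Finset.univ.filter fun e' => P e' = P e).card : ℝ) / (q : ℝ) ^ n) ^ l *
          (((Finset.univ.filter fun e' => P e' < P e).card : ℝ) / (q : ℝ) ^ n) ^ (M - 1 - l) /
          ((l : ℝ) + 1))
      = (((q : ℝ) ^ n) ^ M)⁻¹ * (q:ℝ)^n * ∑ l ∈ Finset.range M,
          ((M - 1).choose l : ℝ) *
            ((Finset.univ.filter fun e' => P e' = P e).card : ℝ) ^ l *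
            ((Finset.univ.filter fun e' => P e' < P e).card : ℝ) ^ (M - 1 - l) /
            ((l : ℝ) + 1) := by
    rw [Finset.mul_sum]
    refine Finset.sum_congr rfl fun l hl => ?_
    have hl' : l ≤ M - 1 := Nat.le_pred_of_lt (Finset.mem_range.1 hl)
    have hpow : ((q:ℝ)^n)^M = ((q:ℝ)^n)^l * ((q:ℝ)^n)^(M-1-l) * (q:ℝ)^n := by
      rw [← pow_add, ← pow_succ]
      congr 1
      omega
    have hl0 : ((l:ℝ) + 1) ≠ 0 := by positivity
    rw [div_pow, div_pow, hpow]
    field_simp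
  rw [hsum]
  ring
end

section
/- Let γ ∈ [0,1] and p ∈ (0,1), with the pure input states χ₊(p) = [[1−p, √(p(1−p))], [√(p(1−p)), p]] and χ₋(p) = [[1−p, −√(p(1−p))], [−√(p(1−p)), p]]. Then there exists a two-outcome POVM (Λ₀, Λ₁) on ℂ² such that (1/2)·Re Tr(Λ₀ · N_γ(χ₊(p))) + (1/2)·Re Tr(Λ₁ · N_γ(χ₋(p))) = 1/2 + √((1−γ)·p·(1−p)); equivalently, the Hermitian matrix N_γ(χ₊(p)) − N_γ(χ₋(p)) has eigenvalues ±2·√((1−γ)·p·(1−p)). -/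
open Matrix Complex
open scoped ComplexOrder

/-- The Holevo-χ-capacity–achieving pure input state `χ₊(p)`. -/
noncomputable def χPlus (p : ℝ) : Matrix (Fin 2) (Fin 2) ℂ :=
  !![(1 - p : ℂ), (Real.sqrt (p * (1 - p)) : ℂ);
     (Real.sqrt (p * (1 - p)) : ℂ), (p : ℂ)]

/-- The Holevo-χ-capacity–achieving pure input state `χ₋(p)`. -/
noncomputable def χMinus (p : ℝ) : Matrix (Fin 2) (Fin 2) ℂ :=
  !![(1 - p : ℂ), (-(Real.sqrt (p * (1 - p))) : ℂ);
     (-(Real.sqrt (p * (1 - p))) : ℂ), (p : ℂ)]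

lemma adc_plus_eq (γ : ℝ) (hγ0 : 0 ≤ γ) (hγ1 : γ ≤ 1) (p : ℝ) :
    ADC γ (χPlus p) = !![((1 - p + γ*p : ℝ) : ℂ), ((Real.sqrt (1-γ) * Real.sqrt (p*(1-p)) : ℝ) : ℂ);
      ((Real.sqrt (1-γ) * Real.sqrt (p*(1-p)) : ℝ) : ℂ), (((1-γ)*p : ℝ) : ℂ)] := by
  have h1 : (Real.sqrt γ : ℂ) * (Real.sqrt γ) = (γ:ℂ) := by
    norm_cast; exact Real.mul_self_sqrt hγ0
  have h2 : (Real.sqrt (1-γ) : ℂ) * (Real.sqrt (1-γ)) = 1 - (γ:ℂ) := by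
    rw [show ((1:ℂ) - γ) = ((1-γ:ℝ):ℂ) by push_cast; ring]
    norm_cast; exact Real.mul_self_sqrt (by linarith)
  ext i j
  fin_cases i <;> fin_cases j <;>
    simp [ADC, K₀, K₁, χPlus, Matrix.mul_apply, Matrix.vecMul, dotProduct,
      Matrix.conjTranspose_apply, Fin.sum_univ_two] <;>
    push_cast <;>
    first
      | ring1
      | linear_combination (p:ℂ)*h1
      | linear_combination (p:ℂ)*h2

lemma adc_minus_eq (γ : ℝ) (hγ0 : 0 ≤ γ) (hγ1 : γ ≤ 1) (p : ℝ) :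
    ADC γ (χMinus p) = !![((1 - p + γ*p : ℝ) : ℂ), ((-(Real.sqrt (1-γ) * Real.sqrt (p*(1-p))) : ℝ) : ℂ);
      ((-(Real.sqrt (1-γ) * Real.sqrt (p*(1-p))) : ℝ) : ℂ), (((1-γ)*p : ℝ) : ℂ)] := by
  have h1 : (Real.sqrt γ : ℂ) * (Real.sqrt γ) = (γ:ℂ) := by
    norm_cast; exact Real.mul_self_sqrt hγ0
  have h2 : (Real.sqrt (1-γ) : ℂ) * (Real.sqrt (1-γ)) = 1 - (γ:ℂ) := by
    rw [show ((1:ℂ) - γ) = ((1-γ:ℝ):ℂ) by push_cast; ring]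
    norm_cast; exact Real.mul_self_sqrt (by linarith)
  ext i j
  fin_cases i <;> fin_cases j <;>
    simp [ADC, K₀, K₁, χMinus, Matrix.mul_apply, Matrix.vecMul, dotProduct,
      Matrix.conjTranspose_apply, Fin.sum_univ_two] <;>
    push_cast <;>
    first
      | ring1
      | linear_combination (p:ℂ)*h1
      | linear_combination (p:ℂ)*h2

/-- For `γ ∈ [0,1]` and `p ∈ (0,1)`, there is a two-outcome POVM achieving
average success probability exactly `1/2 + √((1−γ)p(1−p))` for the inputs `χ₊(p)`, `χ₋(p)`
over the ADC; equivalently `N_γ(χ₊(p)) − N_γ(χ₋(p))` has eigenvalues `±2√((1−γ)p(1−p))`. -/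
theorem stmt17 (γ : ℝ) (hγ0 : 0 ≤ γ) (hγ1 : γ ≤ 1)
    (p : ℝ) (hp0 : 0 < p) (hp1 : p < 1) :
    (∃ Λ₀ Λ₁ : Matrix (Fin 2) (Fin 2) ℂ,
      Λ₀.PosSemidef ∧ Λ₁.PosSemidef ∧ Λ₀ + Λ₁ = 1 ∧
      (1/2) * (Λ₀ * ADC γ (χPlus p)).trace.re + (1/2) * (Λ₁ * ADC γ (χMinus p)).trace.re
        = 1/2 + Real.sqrt ((1 - γ) * p * (1 - p))) ∧
    (∀ hD : (ADC γ (χPlus p) - ADC γ (χMinus p)).IsHermitian,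
      (hD.eigenvalues 0 = 2 * Real.sqrt ((1 - γ) * p * (1 - p)) ∧
       hD.eigenvalues 1 = -(2 * Real.sqrt ((1 - γ) * p * (1 - p)))) ∨
      (hD.eigenvalues 0 = -(2 * Real.sqrt ((1 - γ) * p * (1 - p))) ∧
       hD.eigenvalues 1 = 2 * Real.sqrt ((1 - γ) * p * (1 - p)))) := by
  set a := Real.sqrt (1 - γ) with ha
  set s := Real.sqrt (p * (1 - p)) with hs
  have hsqrt : Real.sqrt ((1 - γ) * p * (1 - p)) = a * s := by
    rw [show (1 - γ) * p * (1 - p) = (1 - γ) * (p * (1 - p)) by ring,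
      Real.sqrt_mul (by linarith)]
  constructor
  · refine ⟨ρPlus, ρMinus, ?_, ?_, ?_, ?_⟩
    · have h : ρPlus = ρPlusᴴ * ρPlus := by
        ext i j
        fin_cases i <;> fin_cases j <;>
          simp [ρPlus, Matrix.mul_apply, Matrix.conjTranspose_apply, Fin.sum_univ_two,
            map_ofNat] <;> norm_num
      rw [h]; exact Matrix.posSemidef_conjTranspose_mul_self _
    · have h : ρMinus = ρMinusᴴ * ρMinus := by
        ext i j
        fin_cases i <;> fin_cases j <;>
          simp [ρMinus, Matrix.mul_apply, Matrix.conjTranspose_apply, Fin.sum_univ_two,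
            map_ofNat] <;> norm_num
      rw [h]; exact Matrix.posSemidef_conjTranspose_mul_self _
    · ext i j
      fin_cases i <;> fin_cases j <;>
        simp [ρPlus, ρMinus, Matrix.one_apply] <;> norm_num
    · have htr1 : (ρPlus * ADC γ (χPlus p)).trace = ((1/2 + a * s : ℝ) : ℂ) := by
        rw [adc_plus_eq γ hγ0 hγ1 p]
        simp [ρPlus, Matrix.trace_fin_two, Matrix.mul_apply, Fin.sum_univ_two]
        push_cast
        ring
      have htr2 : (ρMinus * ADC γ (χMinus p)).trace = ((1/2 + a * s : ℝ) : ℂ) := by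
        rw [adc_minus_eq γ hγ0 hγ1 p]
        simp [ρMinus, Matrix.trace_fin_two, Matrix.mul_apply, Fin.sum_univ_two]
        push_cast
        ring
      rw [htr1, htr2, Complex.ofReal_re, hsqrt]
      ring
  · intro hD
    set c := 2 * Real.sqrt ((1 - γ) * p * (1 - p)) with hc
    have hc0 : 0 ≤ c := by positivity
    have hDeq : ADC γ (χPlus p) - ADC γ (χMinus p) = !![0, (c:ℂ); (c:ℂ), 0] := by
      rw [adc_plus_eq γ hγ0 hγ1 p, adc_minus_eq γ hγ0 hγ1 p]
      ext i j
      fin_cases i <;> fin_cases j <;>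
        simp [hc, hsqrt, Matrix.sub_apply] <;> push_cast <;> ring
    have hdet : (ADC γ (χPlus p) - ADC γ (χMinus p)).det = -((c:ℂ))^2 := by
      rw [hDeq]; simp [Matrix.det_fin_two_of]; ring
    have hprod : hD.eigenvalues 0 * hD.eigenvalues 1 = -(c^2) := by
      have h := hD.det_eq_prod_eigenvalues
      rw [hdet, Fin.prod_univ_two] at h
      have h2 : ((hD.eigenvalues 0 * hD.eigenvalues 1 : ℝ) : ℂ) = ((-c^2 : ℝ) : ℂ) := by
        push_cast; exact h.symm
      exact_mod_cast h2
    have key : ∀ i, hD.eigenvalues i = c ∨ hD.eigenvalues i = -c := by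
      intro i
      have hsmem := hD.eigenvalues_mem_spectrum_real i
      rw [spectrum.mem_iff, Matrix.isUnit_iff_isUnit_det, isUnit_iff_ne_zero, not_not] at hsmem
      revert hsmem
      generalize hD.eigenvalues i = x
      intro hsmem
      rw [hDeq] at hsmem
      have hxc : ((x:ℂ))^2 - (c:ℂ)^2 = 0 := by
        rw [← hsmem]
        simp [Matrix.det_fin_two, Matrix.algebraMap_matrix_apply, Matrix.sub_apply]
        ring
      have hx2 : x^2 = c^2 := by
        have : ((x^2 - c^2 : ℝ) : ℂ) = 0 := by push_cast; linear_combination hxc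
        have := Complex.ofReal_eq_zero.mp this
        linarith
      have hfac : (x - c) * (x + c) = 0 := by linear_combination hx2
      rcases mul_eq_zero.mp hfac with h | h
      · left; linarith
      · right; linarith
    rcases key 0 with h0 | h0 <;> rcases key 1 with h1 | h1
    · have hcz : c = 0 := by
        rw [h0, h1] at hprod
        have h2 : c ^ 2 = 0 := by nlinarith
        exact pow_eq_zero_iff (two_ne_zero) |>.mp h2
      left; exact ⟨h0, by rw [h1, hcz]; simp⟩
    · left; exact ⟨h0, h1⟩
    · right; exact ⟨h0, h1⟩
    · have hcz : c = 0 := by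
        rw [h0, h1] at hprod
        have h2 : c ^ 2 = 0 := by nlinarith
        exact pow_eq_zero_iff (two_ne_zero) |>.mp h2
      right; exact ⟨h0, by rw [h1, hcz]; simp⟩
end
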